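/- arXiv:1111.4559 — 4 statements merged into one kernel-verified Lean document; each statement's English description precedes it below -/
import Mathlib

section
/- Let $f:\mathbb{R}^d \to \mathbb{R}$ be continuous with $|f(x)| \le C_0(1 + \|x\|^n)$ for some $C_0, n$, and let $\tilde f = f - \int f\, \varphi\, dx$ where $\varphi$ is the invariant Gaussian density of the OU semigroup $T_t$. If additionally $f$ is $C^1$ with polynomially bounded gradient, then there exist constants $C, m > 0$ such that for all $t \ge 1$ and all $x$, $|T_t \tilde f(x)| \le C(1+\|x\|^m) e^{-\mu t}$. -/
/-
Put `c = e^{-μt}` and `s = √(1 - c²)`, so that `T_t h(x) = ∫ h(cx + sy) φ(y) dy`. The product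
density `φ(g) φ(y)` is invariant under the rotation `(g, y) ↦ (cg + sy, cy - sg)` of `ℝᵈ × ℝᵈ`,
hence `∫ f φ = ∬ f(cg + sy) φ(g) φ(y)` and
`T_t f̃(x) = ∬ (f(cx + sy) - f(cg + sy)) φ(g) φ(y) dg dy`.
By the mean value theorem and the bound `‖∇f(z)‖ ≤ C (1 + ‖z‖)^k`, the integrand is at most
`c · C (1 + ‖x‖)^(k+1) (1 + ‖g‖)^(k+1) (1 + ‖y‖)^(2k) φ(g) φ(y)`, and all moments of `φ` are finite.
-/

open MeasureTheory Real Module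
open scoped RealInnerProductSpace

lemma one_add_pow_mul_exp_neg_mul_sq_le {b r : ℝ} (hb : 0 < b) (hr : 0 ≤ r) (k : ℕ) :
    (1 + r) ^ k * rexp (-b * r ^ 2) ≤ rexp (k ^ 2 / (2 * b)) * rexp (-(b / 2) * r ^ 2) := by
  have h₁ : (1 + r) ^ k ≤ rexp (k * r) := by
    rw [exp_nat_mul]
    exact pow_le_pow_left₀ (by linarith) (by linarith [add_one_le_exp r]) k
  -- `k r ≤ b r² / 2 + k² / (2b)` is AM-GM.
  have h₂ : k * r - b * r ^ 2 ≤ k ^ 2 / (2 * b) - b / 2 * r ^ 2 := by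
    rw [div_sub' (by positivity), le_div_iff₀ (by positivity)]
    nlinarith [sq_nonneg (b * r - k)]
  calc (1 + r) ^ k * rexp (-b * r ^ 2) ≤ rexp (k * r) * rexp (-b * r ^ 2) := by gcongr
    _ ≤ rexp (k ^ 2 / (2 * b)) * rexp (-(b / 2) * r ^ 2) := by
      rw [← exp_add, ← exp_add]
      exact exp_le_exp.2 (by linarith)

lemma abs_le_one_of_sq_add_sq_eq_one {c s : ℝ} (hcs : c ^ 2 + s ^ 2 = 1) : |c| ≤ 1 :=
  (sq_le_one_iff_abs_le_one c).1 (by nlinarith)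

section PolynomialWeights

variable {E F : Type*} [NormedAddCommGroup E] [NormedAddCommGroup F]

lemma norm_smul_add_smul_le [NormedSpace ℝ E] {c s : ℝ} (hc : |c| ≤ 1) (hs : |s| ≤ 1)
    (x y : E) : ‖c • x + s • y‖ ≤ ‖x‖ + ‖y‖ := by
  calc ‖c • x + s • y‖ ≤ |c| * ‖x‖ + |s| * ‖y‖ := by
        simpa only [norm_smul, Real.norm_eq_abs] using norm_add_le (c • x) (s • y)
    _ ≤ ‖x‖ + ‖y‖ := by gcongr <;> exact mul_le_of_le_one_left (norm_nonneg _) ‹_›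

lemma one_add_norm_smul_add_smul_le [NormedSpace ℝ E] {c s : ℝ} (hc : |c| ≤ 1) (hs : |s| ≤ 1)
    (x y : E) : 1 + ‖c • x + s • y‖ ≤ (1 + ‖x‖) * (1 + ‖y‖) := by
  nlinarith [norm_smul_add_smul_le hc hs x y, mul_nonneg (norm_nonneg x) (norm_nonneg y)]

lemma norm_le_two_mul_one_add_norm_pow {g : E → F} {C : ℝ} {n : ℕ}
    (h : ∀ x, ‖g x‖ ≤ C * (1 + ‖x‖ ^ n)) (x : E) : ‖g x‖ ≤ 2 * C * (1 + ‖x‖) ^ n := by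
  have hC : 0 ≤ C := nonneg_of_mul_nonneg_left ((norm_nonneg _).trans (h 0)) (by positivity)
  have h₁ : 1 ≤ (1 + ‖x‖) ^ n := one_le_pow₀ (by simp)
  have h₂ : ‖x‖ ^ n ≤ (1 + ‖x‖) ^ n := pow_le_pow_left₀ (norm_nonneg _) (by simp) n
  calc ‖g x‖ ≤ C * (1 + ‖x‖ ^ n) := h x
    _ ≤ C * (2 * (1 + ‖x‖) ^ n) := by gcongr; linarith
    _ = 2 * C * (1 + ‖x‖) ^ n := by ring

lemma norm_sub_le_of_norm_fderiv_le [NormedSpace ℝ E] [NormedSpace ℝ F] {f : E → F}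
    (hf : Differentiable ℝ f) {C : ℝ} {k : ℕ} (hgrad : ∀ z, ‖fderiv ℝ f z‖ ≤ C * (1 + ‖z‖) ^ k)
    (x y : E) : ‖f x - f y‖ ≤ C * (1 + ‖x‖ + ‖y‖) ^ k * ‖x - y‖ := by
  have hC : 0 ≤ C := nonneg_of_mul_nonneg_left ((norm_nonneg _).trans (hgrad 0)) (by positivity)
  have hball : ∀ z ∈ Metric.closedBall (0 : E) (‖x‖ + ‖y‖),
      ‖fderiv ℝ f z‖ ≤ C * (1 + ‖x‖ + ‖y‖) ^ k := fun z hz => by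
    rw [mem_closedBall_zero_iff] at hz
    calc ‖fderiv ℝ f z‖ ≤ C * (1 + ‖z‖) ^ k := hgrad z
      _ ≤ C * (1 + ‖x‖ + ‖y‖) ^ k :=
        mul_le_mul_of_nonneg_left (pow_le_pow_left₀ (by positivity) (by linarith) k) hC
  exact (convex_closedBall 0 _).norm_image_sub_le_of_norm_fderiv_le (fun z _ => hf z) hball
    (by simp) (by simp)

lemma abs_sub_comp_smul_add_smul_le [NormedSpace ℝ E] {f : E → ℝ} (hf : Differentiable ℝ f)
    {C : ℝ} {k : ℕ} (hgrad : ∀ z, ‖fderiv ℝ f z‖ ≤ C * (1 + ‖z‖) ^ k) {c s : ℝ} (hc : 0 ≤ c)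
    (hcs : c ^ 2 + s ^ 2 = 1) (x g y : E) :
    |f (c • x + s • y) - f (c • g + s • y)| ≤
      C * c * ((1 + ‖x‖) ^ (k + 1) * (1 + ‖g‖) ^ (k + 1) * (1 + ‖y‖) ^ (2 * k)) := by
  have hC : 0 ≤ C := nonneg_of_mul_nonneg_left ((norm_nonneg _).trans (hgrad 0)) (by positivity)
  have hc₁ := abs_le_one_of_sq_add_sq_eq_one hcs
  have hs₁ := abs_le_one_of_sq_add_sq_eq_one (c := s) (s := c) (by linarith)
  have hx₀ := norm_nonneg x
  have hg₀ := norm_nonneg g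
  have hy₀ := norm_nonneg y
  have hsub : ‖(c • x + s • y) - (c • g + s • y)‖ = c * ‖x - g‖ := by
    rw [add_sub_add_right_eq_sub, ← smul_sub, norm_smul, norm_of_nonneg hc]
  have hR : 1 + ‖c • x + s • y‖ + ‖c • g + s • y‖ ≤ (1 + ‖x‖) * (1 + ‖g‖) * (1 + ‖y‖) ^ 2 := by
    nlinarith [norm_smul_add_smul_le hc₁ hs₁ x y, norm_smul_add_smul_le hc₁ hs₁ g y,
      mul_nonneg (mul_nonneg hx₀ hg₀) (sq_nonneg ‖y‖), mul_nonneg hx₀ hg₀, mul_nonneg hx₀ hy₀,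
      mul_nonneg hg₀ hy₀]
  have hxg : ‖x - g‖ ≤ (1 + ‖x‖) * (1 + ‖g‖) := by
    nlinarith [norm_sub_le x g, mul_nonneg hx₀ hg₀]
  calc |f (c • x + s • y) - f (c • g + s • y)|
      ≤ C * (1 + ‖c • x + s • y‖ + ‖c • g + s • y‖) ^ k * ‖(c • x + s • y) - (c • g + s • y)‖ :=
        norm_sub_le_of_norm_fderiv_le hf hgrad _ _
    _ ≤ C * ((1 + ‖x‖) * (1 + ‖g‖) * (1 + ‖y‖) ^ 2) ^ k * (c * ((1 + ‖x‖) * (1 + ‖g‖))) := by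
        rw [hsub]; gcongr
    _ = _ := by rw [mul_pow, mul_pow, ← pow_mul]; ring

end PolynomialWeights

section Gaussian

variable {V : Type*} [NormedAddCommGroup V] [InnerProductSpace ℝ V]

variable (V) in
/-- With `a = μ / σ²` this is the invariant density `φ` of covariance `(σ² / (2μ)) I`. -/
noncomputable def gaussianDensity (a : ℝ) (y : V) : ℝ :=
  (a / π) ^ (finrank ℝ V / 2 : ℝ) * rexp (-a * ‖y‖ ^ 2)

lemma gaussianDensity_nonneg {a : ℝ} (ha : 0 ≤ a) (y : V) : 0 ≤ gaussianDensity V a y := by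
  unfold gaussianDensity; positivity

lemma continuous_gaussianDensity (a : ℝ) : Continuous (gaussianDensity V a) := by
  unfold gaussianDensity; fun_prop

def planeRotation (c s : ℝ) (p : V × V) : V × V := (c • p.1 + s • p.2, c • p.2 - s • p.1)

lemma norm_sq_add_norm_sq_planeRotation {c s : ℝ} (hcs : c ^ 2 + s ^ 2 = 1) (p : V × V) :
    ‖(planeRotation c s p).1‖ ^ 2 + ‖(planeRotation c s p).2‖ ^ 2 = ‖p.1‖ ^ 2 + ‖p.2‖ ^ 2 := by
  simp only [planeRotation, norm_add_sq_real, norm_sub_sq_real, norm_smul, real_inner_smul_left,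
    real_inner_smul_right, real_inner_comm p.1 p.2, Real.norm_eq_abs, mul_pow, sq_abs]
  linear_combination (‖p.1‖ ^ 2 + ‖p.2‖ ^ 2) * hcs

lemma gaussianDensity_planeRotation (a : ℝ) {c s : ℝ} (hcs : c ^ 2 + s ^ 2 = 1) (p : V × V) :
    gaussianDensity V a (planeRotation c s p).1 * gaussianDensity V a (planeRotation c s p).2 =
      gaussianDensity V a p.1 * gaussianDensity V a p.2 := by
  have h := norm_sq_add_norm_sq_planeRotation hcs p
  simp only [gaussianDensity]
  rw [mul_mul_mul_comm, mul_mul_mul_comm _ (rexp _), ← exp_add, ← exp_add]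
  congr 2
  linear_combination -a * h

lemma mul_gaussianDensity_prod_eq_comp_planeRotation (a : ℝ) {c s : ℝ} (hcs : c ^ 2 + s ^ 2 = 1)
    (F : V → ℝ) (p : V × V) :
    F (c • p.1 + s • p.2) * gaussianDensity V a p.1 * gaussianDensity V a p.2 =
      F (planeRotation c s p).1 * gaussianDensity V a (planeRotation c s p).1 *
        gaussianDensity V a (planeRotation c s p).2 := by
  rw [mul_assoc, mul_assoc, gaussianDensity_planeRotation a hcs]
  rfl

variable [FiniteDimensional ℝ V] [MeasurableSpace V] [BorelSpace V]

/-- The rotation is an isometry of `V ⊕₂ V`, whose volume is the product volume. -/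
lemma measurePreserving_planeRotation {c s : ℝ} (hcs : c ^ 2 + s ^ 2 = 1) :
    MeasurePreserving (planeRotation (V := V) c s) := by
  let e := WithLp.linearEquiv 2 ℝ (V × V)
  let L : WithLp 2 (V × V) →ₗᵢ[ℝ] WithLp 2 (V × V) :=
    { toLinearMap := e.symm.toLinearMap ∘ₗ
        ((c • LinearMap.fst ℝ V V + s • LinearMap.snd ℝ V V).prod
          (c • LinearMap.snd ℝ V V - s • LinearMap.fst ℝ V V)) ∘ₗ e.toLinearMap
      norm_map' := fun p => by
        rw [← sq_eq_sq₀ (norm_nonneg _) (norm_nonneg _), WithLp.prod_norm_sq_eq_of_L2,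
          WithLp.prod_norm_sq_eq_of_L2]
        exact norm_sq_add_norm_sq_planeRotation hcs p.ofLp }
  exact (WithLp.volume_preserving_ofLp V V).comp
    ((L.toLinearIsometryEquiv rfl).measurePreserving.comp (WithLp.volume_preserving_toLp V V))

lemma integral_gaussianDensity {a : ℝ} (ha : 0 < a) : ∫ y, gaussianDensity V a y = 1 := by
  simp only [gaussianDensity]
  rw [integral_const_mul, GaussianFourier.integral_rexp_neg_mul_sq_norm ha,
    ← mul_rpow (by positivity) (by positivity), div_mul_div_cancel₀ pi_ne_zero, div_self ha.ne',
    one_rpow]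

variable (V) in
noncomputable def gaussianMoment (a : ℝ) (k : ℕ) : ℝ :=
  ∫ y : V, (1 + ‖y‖) ^ k * gaussianDensity V a y

lemma gaussianMoment_nonneg {a : ℝ} (ha : 0 ≤ a) (k : ℕ) : 0 ≤ gaussianMoment V a k :=
  integral_nonneg fun y => mul_nonneg (by positivity) (gaussianDensity_nonneg ha y)

lemma integrable_one_add_norm_pow_mul_gaussianDensity {a : ℝ} (ha : 0 < a) (k : ℕ) :
    Integrable (fun y : V => (1 + ‖y‖) ^ k * gaussianDensity V a y) := by
  have hgauss : Integrable (fun y : V => rexp (-(a / 2) * ‖y‖ ^ 2)) := by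
    simpa [← Complex.ofReal_pow, Complex.norm_exp] using
      (GaussianFourier.integrable_cexp_neg_mul_sq_norm_add (V := V)
        (b := ((a / 2 : ℝ) : ℂ)) (by simpa using ha) 0 0).norm
  refine (hgauss.const_mul ((a / π) ^ (finrank ℝ V / 2 : ℝ) * rexp (k ^ 2 / (2 * a)))).mono'
    (by unfold gaussianDensity; fun_prop) (Filter.Eventually.of_forall fun y => ?_)
  rw [norm_of_nonneg (by have := gaussianDensity_nonneg ha.le y; positivity), gaussianDensity,
    mul_left_comm, mul_assoc _ (rexp _)]
  exact mul_le_mul_of_nonneg_left (one_add_pow_mul_exp_neg_mul_sq_le ha (norm_nonneg y) k)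
    (by positivity)

lemma integrable_mul_gaussianDensity_of_abs_le {a : ℝ} (ha : 0 < a) {F : V → ℝ}
    (hF : AEStronglyMeasurable F) {C : ℝ} {k : ℕ} (hbound : ∀ y, |F y| ≤ C * (1 + ‖y‖) ^ k) :
    Integrable (fun y => F y * gaussianDensity V a y) := by
  refine ((integrable_one_add_norm_pow_mul_gaussianDensity ha k).const_mul C).mono'
    (hF.mul (continuous_gaussianDensity a).aestronglyMeasurable)
    (Filter.Eventually.of_forall fun y => ?_)
  rw [norm_mul, norm_of_nonneg (gaussianDensity_nonneg ha.le y), ← mul_assoc]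
  exact mul_le_mul_of_nonneg_right (hbound y) (gaussianDensity_nonneg ha.le y)

lemma integrable_gaussianDensity {a : ℝ} (ha : 0 < a) : Integrable (gaussianDensity V a) :=
  Integrable.of_integral_ne_zero (by rw [integral_gaussianDensity ha]; exact one_ne_zero)

lemma integral_mul_gaussianDensity_eq_integral_prod {a : ℝ} (ha : 0 < a) (G : V → ℝ) :
    ∫ y, G y * gaussianDensity V a y =
      ∫ p : V × V, G p.2 * gaussianDensity V a p.1 * gaussianDensity V a p.2 := by
  calc ∫ y, G y * gaussianDensity V a y
      = (∫ g, gaussianDensity V a g) * ∫ y, G y * gaussianDensity V a y := by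
        rw [integral_gaussianDensity ha, one_mul]
    _ = _ := by
        rw [← integral_prod_mul]
        exact integral_congr_ae (ae_of_all _ fun p => by ring)

lemma MeasureTheory.Integrable.mul_gaussianDensity_prod {a : ℝ} (ha : 0 < a) {G : V → ℝ}
    (hG : Integrable (fun y => G y * gaussianDensity V a y)) :
    Integrable (fun p : V × V => G p.2 * gaussianDensity V a p.1 * gaussianDensity V a p.2) :=
  ((integrable_gaussianDensity ha).mul_prod hG).congr (ae_of_all _ fun p => by ring)

lemma integrable_comp_mul_gaussianDensity_prod {a : ℝ} (ha : 0 < a) {c s : ℝ}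
    (hcs : c ^ 2 + s ^ 2 = 1) {F : V → ℝ} (hF : Integrable (fun y => F y * gaussianDensity V a y)) :
    Integrable (fun p : V × V =>
      F (c • p.1 + s • p.2) * gaussianDensity V a p.1 * gaussianDensity V a p.2) := by
  simp_rw [mul_gaussianDensity_prod_eq_comp_planeRotation a hcs F]
  exact (measurePreserving_planeRotation hcs).integrable_comp_of_integrable
    (g := fun q : V × V => F q.1 * gaussianDensity V a q.1 * gaussianDensity V a q.2)
    (hF.mul_prod (integrable_gaussianDensity (V := V) ha))

lemma integral_comp_mul_gaussianDensity_prod {a : ℝ} (ha : 0 < a) {c s : ℝ}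
    (hcs : c ^ 2 + s ^ 2 = 1) {F : V → ℝ} (hF : Integrable (fun y => F y * gaussianDensity V a y)) :
    ∫ p : V × V, F (c • p.1 + s • p.2) * gaussianDensity V a p.1 * gaussianDensity V a p.2 =
      ∫ z, F z * gaussianDensity V a z := by
  have hR : MeasurePreserving (planeRotation (V := V) c s) (volume.prod volume)
      (volume.prod volume) := measurePreserving_planeRotation hcs
  have hG := hF.mul_prod (integrable_gaussianDensity (V := V) ha)
  have h := integral_map hR.measurable.aemeasurable (hR.map_eq ▸ hG.aestronglyMeasurable)
  rw [hR.map_eq] at h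
  simp_rw [mul_gaussianDensity_prod_eq_comp_planeRotation a hcs F]
  refine h.symm.trans ?_
  rw [integral_prod_mul (fun y => F y * gaussianDensity V a y), integral_gaussianDensity ha,
    mul_one]

lemma integral_sub_const_mul_gaussianDensity {a : ℝ} (ha : 0 < a) {G : V → ℝ}
    (hG : Integrable (fun y => G y * gaussianDensity V a y)) (b : ℝ) :
    ∫ y, (G y - b) * gaussianDensity V a y = (∫ y, G y * gaussianDensity V a y) - b := by
  simp_rw [sub_mul]
  rw [integral_sub hG ((integrable_gaussianDensity ha).const_mul b), integral_const_mul,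
    integral_gaussianDensity ha, mul_one]

theorem abs_integral_comp_sub_mean_mul_gaussianDensity_le {a : ℝ} (ha : 0 < a) {f : V → ℝ}
    (hf : Differentiable ℝ f) {C₀ C₁ : ℝ} {n k : ℕ} (hgrow : ∀ x, |f x| ≤ C₀ * (1 + ‖x‖) ^ n)
    (hgrad : ∀ x, ‖fderiv ℝ f x‖ ≤ C₁ * (1 + ‖x‖) ^ k) {c s : ℝ} (hc : 0 ≤ c)
    (hcs : c ^ 2 + s ^ 2 = 1) (x : V) :
    |∫ y, (f (c • x + s • y) - ∫ z, f z * gaussianDensity V a z) * gaussianDensity V a y| ≤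
      C₁ * c * (1 + ‖x‖) ^ (k + 1) * (gaussianMoment V a (k + 1) * gaussianMoment V a (2 * k)) := by
  have hC₀ : 0 ≤ C₀ := nonneg_of_mul_nonneg_left ((abs_nonneg _).trans (hgrow 0)) (by positivity)
  have hf₀ : Integrable (fun z => f z * gaussianDensity V a z) :=
    integrable_mul_gaussianDensity_of_abs_le ha hf.continuous.aestronglyMeasurable hgrow
  have hfx : Integrable (fun y => f (c • x + s • y) * gaussianDensity V a y) := by
    refine integrable_mul_gaussianDensity_of_abs_le ha
      (hf.continuous.comp (by fun_prop)).aestronglyMeasurable (C := C₀ * (1 + ‖x‖) ^ n) (k := n)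
      fun y => ?_
    calc |f (c • x + s • y)| ≤ C₀ * (1 + ‖c • x + s • y‖) ^ n := hgrow _
      _ ≤ C₀ * ((1 + ‖x‖) * (1 + ‖y‖)) ^ n := by
          gcongr
          exact one_add_norm_smul_add_smul_le (abs_le_one_of_sq_add_sq_eq_one hcs)
            (abs_le_one_of_sq_add_sq_eq_one (c := s) (s := c) (by linarith)) x y
      _ = C₀ * (1 + ‖x‖) ^ n * (1 + ‖y‖) ^ n := by rw [mul_pow, mul_assoc]
  rw [integral_sub_const_mul_gaussianDensity ha hfx,
    ← integral_comp_mul_gaussianDensity_prod ha hcs hf₀,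
    integral_mul_gaussianDensity_eq_integral_prod ha,
    ← integral_sub (hfx.mul_gaussianDensity_prod ha)
      (integrable_comp_mul_gaussianDensity_prod ha hcs hf₀),
    gaussianMoment, gaussianMoment, ← integral_prod_mul, ← integral_const_mul, ← Real.norm_eq_abs]
  refine norm_integral_le_of_norm_le
    (((integrable_one_add_norm_pow_mul_gaussianDensity (V := V) ha _).mul_prod
      (integrable_one_add_norm_pow_mul_gaussianDensity (V := V) ha _)).const_mul _)
    (ae_of_all _ fun p => ?_)
  have hφ₁ := gaussianDensity_nonneg (V := V) ha.le p.1
  have hφ₂ := gaussianDensity_nonneg (V := V) ha.le p.2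
  rw [← sub_mul, ← sub_mul, norm_mul, norm_mul, Real.norm_eq_abs, norm_of_nonneg hφ₁,
    norm_of_nonneg hφ₂]
  calc |f (c • x + s • p.2) - f (c • p.1 + s • p.2)| * gaussianDensity V a p.1 *
        gaussianDensity V a p.2
      ≤ C₁ * c * ((1 + ‖x‖) ^ (k + 1) * (1 + ‖p.1‖) ^ (k + 1) * (1 + ‖p.2‖) ^ (2 * k)) *
          gaussianDensity V a p.1 * gaussianDensity V a p.2 := by
        gcongr
        exact abs_sub_comp_smul_add_smul_le hf hgrad hc hcs x p.1 p.2
    _ = _ := by ring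

end Gaussian

theorem OU_semigroup_decay_general
    {d : ℕ} (μ σ : ℝ) (hμ : 0 < μ) (hσ : 0 < σ)
    (φ : EuclideanSpace ℝ (Fin d) → ℝ)
    (hφ : ∀ y, φ y = (μ / (Real.pi * σ ^ 2)) ^ ((d : ℝ) / 2) *
      Real.exp (-(μ / σ ^ 2) * ‖y‖ ^ 2))
    (T : ℝ → (EuclideanSpace ℝ (Fin d) → ℝ) → EuclideanSpace ℝ (Fin d) → ℝ)
    (hT : ∀ t f x, T t f x =
      ∫ y, f (Real.exp (-μ * t) • x + Real.sqrt (1 - Real.exp (-2 * μ * t)) • y) * φ y)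
    (f : EuclideanSpace ℝ (Fin d) → ℝ)
    (C₀ : ℝ) (n : ℕ) (hgrow : ∀ x, |f x| ≤ C₀ * (1 + ‖x‖ ^ n))
    (hf1 : ContDiff ℝ 1 f)
    (hgrad : ∃ (C₁ : ℝ) (n₁ : ℕ), ∀ x, ‖fderiv ℝ f x‖ ≤ C₁ * (1 + ‖x‖ ^ n₁)) :
    ∃ (C : ℝ) (m : ℕ), 0 < C ∧ 0 < m ∧ ∀ t ≥ (1:ℝ), ∀ x,
      |T t (fun y => f y - ∫ z, f z * φ z) x|
        ≤ C * (1 + ‖x‖ ^ m) * Real.exp (-μ * t) := by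
  obtain ⟨C₁, k, hgrad⟩ := hgrad
  have ha : 0 < μ / σ ^ 2 := by positivity
  obtain rfl : φ = gaussianDensity (EuclideanSpace ℝ (Fin d)) (μ / σ ^ 2) := by
    ext y; rw [hφ, gaussianDensity, finrank_euclideanSpace_fin, div_div, mul_comm π]
  have hC₁ : 0 ≤ C₁ :=
    nonneg_of_mul_nonneg_left ((norm_nonneg _).trans (hgrad 0)) (by positivity)
  set M := gaussianMoment (EuclideanSpace ℝ (Fin d)) (μ / σ ^ 2) (k + 1) *
    gaussianMoment (EuclideanSpace ℝ (Fin d)) (μ / σ ^ 2) (2 * k)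
  have hM : 0 ≤ M := mul_nonneg (gaussianMoment_nonneg ha.le _) (gaussianMoment_nonneg ha.le _)
  refine ⟨2 ^ k * (2 * C₁ * M) + 1, k + 1, by positivity, k.succ_pos, fun t ht x => ?_⟩
  have hcs : rexp (-μ * t) ^ 2 + √(1 - rexp (-2 * μ * t)) ^ 2 = 1 := by
    rw [sq_sqrt (sub_nonneg.2 (exp_le_one_iff.2 (by nlinarith))), ← exp_nat_mul]
    ring_nf
  have hx : (1 + ‖x‖) ^ (k + 1) ≤ 2 ^ k * (1 + ‖x‖ ^ (k + 1)) := by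
    simpa using add_pow_le zero_le_one (norm_nonneg x) (k + 1)
  rw [hT]
  calc _ ≤ 2 * C₁ * rexp (-μ * t) * (1 + ‖x‖) ^ (k + 1) * M :=
        abs_integral_comp_sub_mean_mul_gaussianDensity_le ha (hf1.differentiable one_ne_zero)
          (norm_le_two_mul_one_add_norm_pow (g := f) hgrow)
          (norm_le_two_mul_one_add_norm_pow hgrad) (exp_pos _).le hcs x
    _ ≤ _ := by
        have := exp_pos (-μ * t)
        nlinarith [pow_nonneg (norm_nonneg x) (k + 1), mul_nonneg (mul_nonneg hC₁ hM) this.le]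

/-- Exponential decay of the OU semigroup applied to a centered function of polynomial
growth (with polynomially bounded gradient): `|T_t f̃ (x)| ≤ C (1+‖x‖^m) e^{-μ t}` for `t ≥ 1`. -/
theorem OU_semigroup_decay
    {d : ℕ} (μ σ : ℝ) (hμ : 0 < μ) (hσ : 0 < σ)
    (φ : EuclideanSpace ℝ (Fin d) → ℝ)
    (hφ : ∀ y, φ y = (μ / (Real.pi * σ ^ 2)) ^ ((d : ℝ) / 2) *
      Real.exp (-(μ / σ ^ 2) * ‖y‖ ^ 2))
    (T : ℝ → (EuclideanSpace ℝ (Fin d) → ℝ) → EuclideanSpace ℝ (Fin d) → ℝ)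
    (hT : ∀ t f x, T t f x =
      ∫ y, f (Real.exp (-μ * t) • x + Real.sqrt (1 - Real.exp (-2 * μ * t)) • y) * φ y)
    (f : EuclideanSpace ℝ (Fin d) → ℝ) (hfc : Continuous f)
    (C₀ : ℝ) (n : ℕ) (hgrow : ∀ x, |f x| ≤ C₀ * (1 + ‖x‖ ^ n))
    (hf1 : ContDiff ℝ 1 f)
    (hgrad : ∃ (C₁ : ℝ) (n₁ : ℕ), ∀ x, ‖fderiv ℝ f x‖ ≤ C₁ * (1 + ‖x‖ ^ n₁)) :
    ∃ (C : ℝ) (m : ℕ), 0 < C ∧ 0 < m ∧ ∀ t ≥ (1:ℝ), ∀ x,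
      |T t (fun y => f y - ∫ z, f z * φ z) x|
        ≤ C * (1 + ‖x‖ ^ m) * Real.exp (-μ * t) :=
  OU_semigroup_decay_general μ σ hμ hσ φ hφ T hT f C₀ n hgrow hf1 hgrad
end

section
/- Let $f:\mathbb{R}^d \to \mathbb{R}$ be a $C^1$ function with polynomially bounded derivatives, with $\int f \varphi\, dx = 0$ where $\varphi$ is the invariant Gaussian measure of the OU semigroup $T_t$. Then for every $x \in \mathbb{R}^d$, $\lim_{t \to \infty} e^{\mu t}\, T_t f(x) = x \circ \int_{\mathbb{R}^d} \nabla f(y)\, \varphi(y)\, dy$. -/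
/-!
Put `ε = e^{-μt}`. Then `T_t f x = ∫ f(εx + √(1-ε²) y) φ(y) dy`, and since `f` is centred,
`e^{μt} T_t f x = ∫ ε⁻¹ (f(εx + √(1-ε²) y) - f(y)) φ(y) dy`. The curve `ε ↦ εx + √(1-ε²) y`
passes through `y` at `ε = 0` with velocity `x`, so the integrand tends to `Df(y) x · φ(y)` as
`ε → 0⁺`. By the mean value theorem and the polynomial bound on `Df`, it is dominated by a
polynomial in `‖y‖` times `φ`, which is integrable because the Gaussian has moments of all
orders; dominated convergence concludes.
-/

open MeasureTheory Filter Topology Polynomial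

section GaussianMoments

variable {V : Type*} [NormedAddCommGroup V] [NormedSpace ℝ V] [FiniteDimensional ℝ V]
  [MeasurableSpace V] [BorelSpace V] (μ : Measure V) [μ.IsAddHaarMeasure]

theorem integrable_pow_norm_mul_exp_neg_mul_sq_norm {b : ℝ} (hb : 0 < b) (k : ℕ) :
    Integrable (fun y : V => ‖y‖ ^ k * Real.exp (-b * ‖y‖ ^ 2)) μ := by
  cases subsingleton_or_nontrivial V with
  | inl _ => simp [Subsingleton.elim _ (0 : V)]
  | inr _ =>
    rw [integrable_fun_norm_addHaar μ (f := fun r => r ^ k * Real.exp (-b * r ^ 2))]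
    have hs : (-1 : ℝ) < (Module.finrank ℝ V - 1 + k : ℕ) := by
      linarith [Nat.cast_nonneg (α := ℝ) (Module.finrank ℝ V - 1 + k)]
    refine (integrableOn_rpow_mul_exp_neg_mul_sq hb hs).congr_fun (fun r _ => ?_)
      measurableSet_Ioi
    simp only [Real.rpow_natCast, smul_eq_mul, pow_add, mul_assoc]

end GaussianMoments

section PolynomialMoments

variable {V : Type*} [NormedAddCommGroup V] [MeasurableSpace V] {μ : Measure V} {φ : V → ℝ}

theorem integrable_eval_norm_mul (hmom : ∀ k : ℕ, Integrable (fun y => ‖y‖ ^ k * φ y) μ)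
    (p : ℝ[X]) : Integrable (fun y => p.eval ‖y‖ * φ y) μ := by
  simp_rw [eval_eq_sum_range, Finset.sum_mul, mul_assoc]
  exact integrable_finsetSum _ fun i _ => (hmom i).const_mul _

theorem integrable_smul_of_norm_le_eval_norm {E : Type*} [NormedAddCommGroup E]
    [NormedSpace ℝ E] (hφ0 : 0 ≤ φ) (hmom : ∀ k : ℕ, Integrable (fun y => ‖y‖ ^ k * φ y) μ)
    {g : V → E} (hg : AEStronglyMeasurable g μ) (p : ℝ[X]) (hgp : ∀ y, ‖g y‖ ≤ p.eval ‖y‖) :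
    Integrable (fun y => φ y • g y) μ := by
  have hφ : AEStronglyMeasurable φ μ := by simpa using (hmom 0).aestronglyMeasurable
  refine (integrable_eval_norm_mul hmom p).mono' (hφ.smul hg) (ae_of_all _ fun y => ?_)
  rw [norm_smul, Real.norm_of_nonneg (hφ0 y), mul_comm]
  exact mul_le_mul_of_nonneg_right (hgp y) (hφ0 y)

end PolynomialMoments

section MeanValue

variable {E F : Type*} [NormedAddCommGroup E] [NormedSpace ℝ E] [NormedAddCommGroup F]
  [NormedSpace ℝ F] {f : E → F} {K : ℝ} {n : ℕ}

theorem norm_sub_le_of_norm_fderiv_le_mul_one_add_pow (hf : Differentiable ℝ f)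
    (hK : ∀ z, ‖fderiv ℝ f z‖ ≤ K * (1 + ‖z‖ ^ n)) {R D : ℝ} {z w : E} (hz : ‖z‖ ≤ R)
    (hw : ‖w‖ ≤ R) (hzw : ‖z - w‖ ≤ D) : ‖f z - f w‖ ≤ K * (1 + R ^ n) * D := by
  have hK0 : 0 ≤ K := nonneg_of_mul_nonneg_left ((norm_nonneg _).trans (hK 0)) (by positivity)
  have hR : ∀ u ∈ Metric.closedBall (0 : E) R, ‖fderiv ℝ f u‖ ≤ K * (1 + R ^ n) := fun u hu => by
    grw [hK u, mem_closedBall_zero_iff.1 hu]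
  have hR0 : 0 ≤ R := (norm_nonneg z).trans hz
  have hKR : 0 ≤ K * (1 + R ^ n) := mul_nonneg hK0 (by positivity)
  grw [(convex_closedBall (0 : E) R).norm_image_sub_le_of_norm_fderiv_le (fun u _ => hf u) hR
    (mem_closedBall_zero_iff.2 hw) (mem_closedBall_zero_iff.2 hz), hzw]

end MeanValue

section MehlerCurve

variable {V : Type*} [NormedAddCommGroup V] [NormedSpace ℝ V] {f : V → ℝ} {K : ℝ} {n : ℕ}

theorem norm_add_smul_le {s : ℝ} (hs : |s| ≤ 1) (z y : V) : ‖z + s • y‖ ≤ ‖z‖ + ‖y‖ := by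
  grw [norm_add_le, norm_smul, Real.norm_eq_abs, hs, one_mul]

theorem abs_sqrt_one_sub_sq_le_one (ε : ℝ) : |√(1 - ε ^ 2)| ≤ 1 := by
  rw [abs_of_nonneg (Real.sqrt_nonneg _)]
  exact Real.sqrt_le_one.2 (by nlinarith)

/-- With `ε = e^{-μt}`, Mehler's formula reads `T_t f x = ∫ f (mehlerCurve x y ε) φ(y) dy`. -/
noncomputable def mehlerCurve (x y : V) (ε : ℝ) : V := ε • x + √(1 - ε ^ 2) • y

theorem norm_mehlerCurve_le {ε : ℝ} (h0 : 0 ≤ ε) (h1 : ε ≤ 1) (x y : V) :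
    ‖mehlerCurve x y ε‖ ≤ ‖x‖ + ‖y‖ := by
  grw [mehlerCurve, norm_add_smul_le (abs_sqrt_one_sub_sq_le_one ε), norm_smul,
    Real.norm_of_nonneg h0, h1, one_mul]

theorem norm_mehlerCurve_sub_le {ε : ℝ} (h0 : 0 ≤ ε) (h1 : ε ≤ 1) (x y : V) :
    ‖mehlerCurve x y ε - y‖ ≤ ε * (‖x‖ + ‖y‖) := by
  have hs : 1 - ε ≤ √(1 - ε ^ 2) := Real.le_sqrt_of_sq_le (by nlinarith)
  have hs1 : √(1 - ε ^ 2) ≤ 1 := le_of_abs_le (abs_sqrt_one_sub_sq_le_one ε)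
  calc ‖mehlerCurve x y ε - y‖ = ‖ε • x + (√(1 - ε ^ 2) - 1) • y‖ := by
        rw [mehlerCurve, sub_smul, one_smul, add_sub_assoc]
    _ ≤ ε * ‖x‖ + (1 - √(1 - ε ^ 2)) * ‖y‖ := by
        grw [norm_add_le, norm_smul, norm_smul, Real.norm_of_nonneg h0, Real.norm_eq_abs,
          abs_sub_comm, abs_of_nonneg (by linarith)]
    _ ≤ ε * (‖x‖ + ‖y‖) := by nlinarith [norm_nonneg y]

theorem hasDerivAt_mehlerCurve (x y : V) : HasDerivAt (mehlerCurve x y) x 0 := by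
  have hsqrt : HasDerivAt (fun ε : ℝ => √(1 - ε ^ 2)) 0 0 := by
    simpa using ((hasDerivAt_pow 2 (0 : ℝ)).const_sub 1).sqrt (by norm_num)
  unfold mehlerCurve
  simpa using ((hasDerivAt_id (0 : ℝ)).smul_const x).fun_add (hsqrt.smul_const y)

theorem tendsto_inv_mul_sub_comp_mehlerCurve {x y : V} (hf : DifferentiableAt ℝ f y) :
    Tendsto (fun ε : ℝ => ε⁻¹ * (f (mehlerCurve x y ε) - f y)) (𝓝[>] 0)
      (𝓝 (fderiv ℝ f y x)) := by
  have hy : mehlerCurve x y 0 = y := by simp [mehlerCurve]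
  have hf' : HasFDerivAt f (fderiv ℝ f y) (mehlerCurve x y 0) := by
    rw [hy]; exact hf.hasFDerivAt
  have hcomp := hf'.comp_hasDerivAt 0 (hasDerivAt_mehlerCurve x y)
  refine (hcomp.tendsto_slope.mono_left (nhdsGT_le_nhdsNE 0)).congr fun ε => ?_
  simp [slope_def_field, div_eq_inv_mul, hy]

theorem abs_inv_mul_sub_comp_mehlerCurve_le (hf : Differentiable ℝ f)
    (hK : ∀ z, ‖fderiv ℝ f z‖ ≤ K * (1 + ‖z‖ ^ n)) {ε : ℝ} (h0 : 0 < ε) (h1 : ε ≤ 1) (x y : V) :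
    |ε⁻¹ * (f (mehlerCurve x y ε) - f y)| ≤ K * (1 + (‖y‖ + ‖x‖) ^ n) * (‖y‖ + ‖x‖) := by
  have hdiff := norm_sub_le_of_norm_fderiv_le_mul_one_add_pow hf hK
    ((norm_mehlerCurve_le h0.le h1 x y).trans_eq (add_comm _ _)) (by simp)
    ((norm_mehlerCurve_sub_le h0.le h1 x y).trans_eq (by rw [add_comm]))
  rw [abs_mul, abs_inv, abs_of_pos h0, ← Real.norm_eq_abs]
  calc ε⁻¹ * ‖f (mehlerCurve x y ε) - f y‖
      ≤ ε⁻¹ * (K * (1 + (‖y‖ + ‖x‖) ^ n) * (ε * (‖y‖ + ‖x‖))) := by gcongr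
    _ = K * (1 + (‖y‖ + ‖x‖) ^ n) * (‖y‖ + ‖x‖) := by field_simp

end MehlerCurve

section FirstOrderLimit

variable {V : Type*} [NormedAddCommGroup V] [NormedSpace ℝ V] [MeasurableSpace V]
  [OpensMeasurableSpace V] {μ : Measure V} {φ : V → ℝ} {f : V → ℝ} {K : ℝ} {n : ℕ}

theorem integrable_comp_add_smul_mul (hf : Differentiable ℝ f)
    (hK : ∀ z, ‖fderiv ℝ f z‖ ≤ K * (1 + ‖z‖ ^ n)) (hφ0 : 0 ≤ φ)
    (hmom : ∀ k : ℕ, Integrable (fun y => ‖y‖ ^ k * φ y) μ) (z : V) {s : ℝ} (hs : |s| ≤ 1) :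
    Integrable (fun y => f (z + s • y) * φ y) μ := by
  let p : ℝ[X] := C |f 0| + C K * (1 + (X + C ‖z‖) ^ n) * (X + C ‖z‖)
  have hgrowth : ∀ y, ‖f (z + s • y)‖ ≤ p.eval ‖y‖ := fun y => by
    have hR : ‖z + s • y‖ ≤ ‖y‖ + ‖z‖ := (norm_add_smul_le hs z y).trans_eq (add_comm _ _)
    have := norm_sub_le_of_norm_fderiv_le_mul_one_add_pow hf hK hR (w := 0) (D := ‖y‖ + ‖z‖)
      (by rw [norm_zero]; positivity) (by rwa [sub_zero])
    simp only [p, eval_add, eval_mul, eval_C, eval_pow, eval_X, eval_one]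
    linarith [norm_le_norm_add_norm_sub' (f (z + s • y)) (f 0), Real.norm_eq_abs (f 0)]
  simpa [smul_eq_mul, mul_comm] using integrable_smul_of_norm_le_eval_norm hφ0 hmom
    (hf.continuous.comp (continuous_const.add (continuous_const_smul s))).aestronglyMeasurable
    p hgrowth

theorem tendsto_integral_inv_mul_sub_comp_mehlerCurve
    (hf : Differentiable ℝ f) (hK : ∀ z, ‖fderiv ℝ f z‖ ≤ K * (1 + ‖z‖ ^ n)) (hφ0 : 0 ≤ φ)
    (hmom : ∀ k : ℕ, Integrable (fun y => ‖y‖ ^ k * φ y) μ) (x : V) :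
    Tendsto (fun ε : ℝ => ∫ y, ε⁻¹ * (f (mehlerCurve x y ε) - f y) * φ y ∂μ) (𝓝[>] 0)
      (𝓝 (∫ y, fderiv ℝ f y x * φ y ∂μ)) := by
  let p : ℝ[X] := C K * (1 + (X + C ‖x‖) ^ n) * (X + C ‖x‖)
  have hφ : AEStronglyMeasurable φ μ := by simpa using (hmom 0).aestronglyMeasurable
  refine tendsto_integral_filter_of_dominated_convergence (fun y => p.eval ‖y‖ * φ y)
    (Eventually.of_forall fun ε => ?_) ?_ (integrable_eval_norm_mul hmom p)
    (ae_of_all _ fun y => ((tendsto_inv_mul_sub_comp_mehlerCurve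
      (hf y)).mul_const (φ y)))
  · have := hf.continuous
    exact (Continuous.aestronglyMeasurable (by unfold mehlerCurve; fun_prop)).mul hφ
  · filter_upwards [Ioc_mem_nhdsGT zero_lt_one] with ε hε
    refine ae_of_all _ fun y => ?_
    rw [Real.norm_eq_abs, abs_mul, abs_of_nonneg (hφ0 y)]
    simp only [p, eval_mul, eval_C, eval_add, eval_one, eval_pow, eval_X]
    gcongr
    · exact hφ0 y
    · exact abs_inv_mul_sub_comp_mehlerCurve_le hf hK hε.1 hε.2 x y

theorem tendsto_inv_mul_integral_comp_mehlerCurve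
    (hf : Differentiable ℝ f) (hK : ∀ z, ‖fderiv ℝ f z‖ ≤ K * (1 + ‖z‖ ^ n)) (hφ0 : 0 ≤ φ)
    (hmom : ∀ k : ℕ, Integrable (fun y => ‖y‖ ^ k * φ y) μ)
    (hcentered : ∫ y, f y * φ y ∂μ = 0) (x : V) :
    Tendsto (fun ε : ℝ => ε⁻¹ * ∫ y, f (mehlerCurve x y ε) * φ y ∂μ) (𝓝[>] 0)
      (𝓝 (∫ y, fderiv ℝ f y x * φ y ∂μ)) := by
  refine (tendsto_integral_inv_mul_sub_comp_mehlerCurve hf hK hφ0 hmom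
    x).congr fun ε => ?_
  have hshift : Integrable (fun y => f (mehlerCurve x y ε) * φ y) μ :=
    integrable_comp_add_smul_mul hf hK hφ0 hmom (ε • x) (abs_sqrt_one_sub_sq_le_one ε)
  have hbase : Integrable (fun y => f y * φ y) μ := by
    simpa using integrable_comp_add_smul_mul hf hK hφ0 hmom 0 (s := 1) (by simp)
  simp_rw [mul_assoc, sub_mul]
  rw [integral_const_mul, integral_sub hshift hbase, hcentered, sub_zero]

end FirstOrderLimit

theorem integral_fderiv_apply_mul_eq_inner_integral_smul_gradient {V : Type*}
    [NormedAddCommGroup V] [InnerProductSpace ℝ V] [CompleteSpace V] [MeasurableSpace V]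
    {μ : Measure V} {φ f : V → ℝ} (h : Integrable (fun y => φ y • gradient f y) μ) (x : V) :
    ∫ y, fderiv ℝ f y x * φ y ∂μ = inner ℝ x (∫ y, φ y • gradient f y ∂μ) := by
  rw [← innerSL_apply_apply ℝ, ← (innerSL ℝ x).integral_comp_comm h]
  refine integral_congr_ae (ae_of_all _ fun y => ?_)
  simp only [innerSL_apply_apply, real_inner_smul_right, gradient]
  rw [real_inner_comm, InnerProductSpace.toDual_symm_apply, mul_comm]

theorem OU_semigroup_first_order_asymptotics_general
    {d : ℕ} (μ σ : ℝ) (hμ : 0 < μ) (hσ : 0 < σ)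
    (φ : EuclideanSpace ℝ (Fin d) → ℝ)
    (hφ : ∀ y, φ y = (μ / (Real.pi * σ ^ 2)) ^ ((d : ℝ) / 2) *
      Real.exp (-(μ / σ ^ 2) * ‖y‖ ^ 2))
    (T : ℝ → (EuclideanSpace ℝ (Fin d) → ℝ) → EuclideanSpace ℝ (Fin d) → ℝ)
    (hT : ∀ t f x, T t f x =
      ∫ y, f (Real.exp (-μ * t) • x + Real.sqrt (1 - Real.exp (-2 * μ * t)) • y) * φ y)
    (f : EuclideanSpace ℝ (Fin d) → ℝ)
    (hf1 : ContDiff ℝ 1 f)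
    (hgrad : ∃ (C₁ : ℝ) (n₁ : ℕ), ∀ x, ‖fderiv ℝ f x‖ ≤ C₁ * (1 + ‖x‖ ^ n₁))
    (hcentered : (∫ y, f y * φ y) = 0) :
    ∀ x : EuclideanSpace ℝ (Fin d),
      Tendsto (fun t : ℝ => Real.exp (μ * t) * T t f x) atTop
        (nhds (@inner ℝ _ _ x (∫ y, φ y • gradient f y))) := by
  intro x
  obtain ⟨K, n, hK⟩ := hgrad
  have hf : Differentiable ℝ f := hf1.differentiable one_ne_zero
  have hφ0 : 0 ≤ φ := fun y => by rw [hφ]; positivity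
  have hmom (k : ℕ) : Integrable (fun y => ‖y‖ ^ k * φ y) := by
    simp_rw [hφ, mul_left_comm _ (_ ^ ((d : ℝ) / 2))]
    exact (integrable_pow_norm_mul_exp_neg_mul_sq_norm volume (by positivity) k).const_mul _
  have hgradient : Integrable (fun y => φ y • gradient f y) :=
    integrable_smul_of_norm_le_eval_norm hφ0 hmom
      ((InnerProductSpace.toDual ℝ _).symm.continuous.comp
        (hf1.continuous_fderiv one_ne_zero)).aestronglyMeasurable
      (C K * (1 + X ^ n)) fun y => by simpa [gradient] using hK y
  have hε : Tendsto (fun t => Real.exp (-μ * t)) atTop (𝓝[>] 0) :=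
    Real.tendsto_exp_atBot_nhdsGT.comp (tendsto_id.const_mul_atTop_of_neg (by linarith))
  rw [← integral_fderiv_apply_mul_eq_inner_integral_smul_gradient hgradient]
  refine ((tendsto_inv_mul_integral_comp_mehlerCurve hf hK hφ0 hmom
    hcentered x).comp hε).congr fun t => ?_
  simp only [Function.comp_apply, mehlerCurve]
  rw [hT, ← Real.exp_neg, ← Real.exp_nat_mul]
  ring_nf

/-- First-order asymptotics of the OU semigroup on centered `C¹` functions with
polynomially bounded derivatives: `e^{μ t} T_t f (x) → x ∘ ∫ ∇f dφ` as `t → ∞`. -/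
theorem OU_semigroup_first_order_asymptotics
    {d : ℕ} (μ σ : ℝ) (hμ : 0 < μ) (hσ : 0 < σ)
    (φ : EuclideanSpace ℝ (Fin d) → ℝ)
    (hφ : ∀ y, φ y = (μ / (Real.pi * σ ^ 2)) ^ ((d : ℝ) / 2) *
      Real.exp (-(μ / σ ^ 2) * ‖y‖ ^ 2))
    (T : ℝ → (EuclideanSpace ℝ (Fin d) → ℝ) → EuclideanSpace ℝ (Fin d) → ℝ)
    (hT : ∀ t f x, T t f x =
      ∫ y, f (Real.exp (-μ * t) • x + Real.sqrt (1 - Real.exp (-2 * μ * t)) • y) * φ y)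
    (f : EuclideanSpace ℝ (Fin d) → ℝ)
    (hf1 : ContDiff ℝ 1 f)
    (hgrow : ∃ (C₀ : ℝ) (n : ℕ), ∀ x, |f x| ≤ C₀ * (1 + ‖x‖ ^ n))
    (hgrad : ∃ (C₁ : ℝ) (n₁ : ℕ), ∀ x, ‖fderiv ℝ f x‖ ≤ C₁ * (1 + ‖x‖ ^ n₁))
    (hcentered : (∫ y, f y * φ y) = 0) :
    ∀ x : EuclideanSpace ℝ (Fin d),
      Tendsto (fun t : ℝ => Real.exp (μ * t) * T t f x) atTop
        (nhds (@inner ℝ _ _ x (∫ y, φ y • gradient f y))) :=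
  OU_semigroup_first_order_asymptotics_general μ σ hμ hσ φ hφ T hT f hf1 hgrad hcentered
end

section
/- Let $f$ be a $C^2$ function on $\mathbb{R}$ with polynomially bounded derivatives and $\int f\varphi = 0$ for the OU invariant Gaussian measure $\varphi$. Then there exist $\tilde C, \tilde n > 0$ such that for all $t \ge 1$ and all $x$, $|e^{\mu t} T_t f(x) - x \int f' \varphi\, dy| \le \tilde C (1+|x|^{\tilde n}) e^{-\mu t}$. -/
/-!
Write `a = e^{-μt}` and `s = √(1 - a²)`, so that `T_t f(x) = ∫ f(a x + s y) φ(y) dy`. Taylor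
expansion of `f` at `s y` with increment `a x` gives
`T_t f(x) = ∫ f(s y) φ + a x ∫ f'(s y) φ + O(a² x² (1 + |x|)ⁿ)`.
Since `1 - s ≤ a²`, the mean value theorem shows that `∫ f(s y) φ = ∫ (f(s y) - f(y)) φ` (as `f` is
centred) and `∫ f'(s y) φ - ∫ f' φ` are `O(a²)` as well, the Gaussian having all polynomial moments.
Multiplying by `e^{μt} = 1/a` leaves an error `O(a (1 + |x|)^{n+2}) = O(e^{-μt} (1 + |x|^{n+2}))`.
-/

open MeasureTheory Set Filter Real

lemma abs_le_max_abs_abs_of_mem_uIcc {u v z : ℝ} (hz : z ∈ uIcc u v) : |z| ≤ max |u| |v| := by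
  rcases mem_uIcc.1 hz with ⟨h₁, h₂⟩ | ⟨h₁, h₂⟩
  · exact abs_le_max_abs_abs h₁ h₂
  · exact max_comm |v| |u| ▸ abs_le_max_abs_abs h₁ h₂

lemma one_sub_sqrt_one_sub_sq_le (a : ℝ) : 1 - √(1 - a ^ 2) ≤ a ^ 2 := by
  rcases le_total (a ^ 2) 1 with ha | ha
  · have hs := sq_sqrt (sub_nonneg.2 ha)
    nlinarith [sqrt_nonneg (1 - a ^ 2)]
  · linarith [sqrt_nonneg (1 - a ^ 2)]

lemma exists_abs_le_mul_one_add_abs_pow {g : ℝ → ℝ}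
    (hg : ∃ (C : ℝ) (n : ℕ), ∀ x, |g x| ≤ C * (1 + |x| ^ n)) :
    ∃ (C : ℝ) (n : ℕ), ∀ x, |g x| ≤ C * (1 + |x|) ^ n := by
  obtain ⟨C, n, hC⟩ := hg
  refine ⟨2 * |C|, n, fun x => ?_⟩
  have hw : 1 + |x| ^ n ≤ 2 * (1 + |x|) ^ n := by
    have h₁ : 1 ≤ (1 + |x|) ^ n := one_le_pow₀ (by linarith [abs_nonneg x])
    have h₂ : |x| ^ n ≤ (1 + |x|) ^ n := by gcongr; linarith
    linarith
  calc |g x| ≤ C * (1 + |x| ^ n) := hC x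
    _ ≤ |C| * (2 * (1 + |x|) ^ n) := by gcongr; exact le_abs_self C
    _ = 2 * |C| * (1 + |x|) ^ n := by ring

lemma nonneg_of_abs_le_mul_one_add_abs_pow {g : ℝ → ℝ} {C : ℝ} {n : ℕ}
    (hg : ∀ x, |g x| ≤ C * (1 + |x|) ^ n) : 0 ≤ C := by
  simpa using (abs_nonneg _).trans (hg 0)

lemma abs_mul_add_mul_le {a s : ℝ} (ha : |a| ≤ 1) (hs : |s| ≤ 1) (x y : ℝ) :
    |a * x + s * y| ≤ |x| + |y| := by
  calc |a * x + s * y| ≤ |a| * |x| + |s| * |y| := by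
        simpa only [abs_mul] using abs_add_le (a * x) (s * y)
    _ ≤ 1 * |x| + 1 * |y| := by gcongr
    _ = |x| + |y| := by ring

lemma abs_apply_le_of_abs_le_add {g : ℝ → ℝ} {C : ℝ} {n : ℕ}
    (hg : ∀ x, |g x| ≤ C * (1 + |x|) ^ n) {x y z : ℝ} (hz : |z| ≤ |x| + |y|) :
    |g z| ≤ C * (1 + |x|) ^ n * (1 + |y|) ^ n := by
  have hC := nonneg_of_abs_le_mul_one_add_abs_pow hg
  have hw : 1 + |z| ≤ (1 + |x|) * (1 + |y|) := by nlinarith [abs_nonneg x, abs_nonneg y]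
  calc |g z| ≤ C * (1 + |z|) ^ n := hg z
    _ ≤ C * ((1 + |x|) * (1 + |y|)) ^ n := by gcongr
    _ = C * (1 + |x|) ^ n * (1 + |y|) ^ n := by rw [mul_pow, mul_assoc]

lemma abs_comp_mul_le {g : ℝ → ℝ} {C : ℝ} {n : ℕ}
    (hg : ∀ x, |g x| ≤ C * (1 + |x|) ^ n) {s : ℝ} (hs : |s| ≤ 1) (y : ℝ) :
    |g (s * y)| ≤ C * (1 + |y|) ^ n := by
  simpa using abs_apply_le_of_abs_le_add hg (x := 0) (z := s * y)
    (by simpa using abs_mul_add_mul_le (abs_zero.trans_le zero_le_one) hs 0 y)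

lemma abs_sub_sub_mul_deriv_le {f : ℝ → ℝ} (hf : Differentiable ℝ f)
    (hf' : Differentiable ℝ (deriv f)) {u h M : ℝ}
    (hM : ∀ z ∈ uIcc u (u + h), |deriv (deriv f) z| ≤ M) :
    |f (u + h) - f u - h * deriv f u| ≤ M * h ^ 2 := by
  have hM₀ : 0 ≤ M := (abs_nonneg _).trans (hM u left_mem_uIcc)
  -- mean value inequality for `z ↦ f z - z f'(u)`, whose derivative is `≤ M |h|` on the segment
  have hderiv : ∀ z, HasDerivAt (fun z => f z - z * deriv f u) (deriv f z - deriv f u) z :=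
    fun z => (hf z).hasDerivAt.sub (hasDerivAt_mul_const (deriv f u))
  have hslope : ∀ z ∈ uIcc u (u + h), ‖deriv (fun z => f z - z * deriv f u) z‖ ≤ M * |h| := by
    intro z hz
    have hsub : uIcc u z ⊆ uIcc u (u + h) := uIcc_subset_uIcc_left hz
    have := (convex_uIcc u z).norm_image_sub_le_of_norm_deriv_le (fun w _ => hf' w)
      (fun w hw => hM w (hsub hw)) left_mem_uIcc right_mem_uIcc
    rw [(hderiv z).deriv]
    calc ‖deriv f z - deriv f u‖ ≤ M * |z - u| := this
      _ ≤ M * |h| :=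
        mul_le_mul_of_nonneg_left (by simpa using abs_sub_left_of_mem_uIcc hz) hM₀
  have := (convex_uIcc u (u + h)).norm_image_sub_le_of_norm_deriv_le
    (fun z _ => (hderiv z).differentiableAt) hslope left_mem_uIcc right_mem_uIcc
  calc |f (u + h) - f u - h * deriv f u|
      = ‖(f (u + h) - (u + h) * deriv f u) - (f u - u * deriv f u)‖ := by
        rw [Real.norm_eq_abs]; ring_nf
    _ ≤ M * |h| * ‖u + h - u‖ := this
    _ = M * h ^ 2 := by
      rw [add_sub_cancel_left, Real.norm_eq_abs, mul_assoc, ← abs_mul, ← sq, abs_sq]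

lemma abs_taylor_remainder_comp_mul_add_mul_le {f : ℝ → ℝ} (hf : ContDiff ℝ 2 f) {C : ℝ} {n : ℕ}
    (hf₂ : ∀ x, |deriv (deriv f) x| ≤ C * (1 + |x|) ^ n) {a s : ℝ} (ha : |a| ≤ 1) (hs : |s| ≤ 1)
    (x y : ℝ) :
    |f (a * x + s * y) - f (s * y) - a * x * deriv f (s * y)|
      ≤ C * (1 + |x|) ^ n * (a * x) ^ 2 * (1 + |y|) ^ n := by
  have hdf : Differentiable ℝ f := hf.differentiable (by norm_num)
  have hdf' : Differentiable ℝ (deriv f) :=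
    (hf.iterate_deriv' 1 1).differentiable (by norm_num)
  have hM : ∀ z ∈ uIcc (s * y) (s * y + a * x),
      |deriv (deriv f) z| ≤ C * (1 + |x|) ^ n * (1 + |y|) ^ n := by
    intro z hz
    refine abs_apply_le_of_abs_le_add hf₂ ((abs_le_max_abs_abs_of_mem_uIcc hz).trans (max_le ?_ ?_))
    · simpa using abs_mul_add_mul_le (abs_zero.trans_le zero_le_one) hs x y
    · simpa [add_comm] using abs_mul_add_mul_le ha hs x y
  have := abs_sub_sub_mul_deriv_le hdf hdf' hM
  rw [add_comm (s * y)] at this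
  linarith

lemma add_mul_abs_add_sq_mul_le {K₁ K₂ K₃ : ℝ} (hK₁ : 0 ≤ K₁) (hK₂ : 0 ≤ K₂) (hK₃ : 0 ≤ K₃)
    (x : ℝ) (n : ℕ) :
    K₁ + |x| * K₂ + x ^ 2 * (1 + |x|) ^ n * K₃ ≤ (K₁ + K₂ + K₃) * (1 + |x|) ^ (n + 2) := by
  have hw : 1 ≤ 1 + |x| := by linarith [abs_nonneg x]
  have hw₁ : 1 ≤ (1 + |x|) ^ (n + 2) := one_le_pow₀ hw
  have hw₂ : |x| ≤ (1 + |x|) ^ (n + 2) := by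
    linarith [le_self_pow₀ hw (show n + 2 ≠ 0 by omega)]
  have hw₃ : x ^ 2 * (1 + |x|) ^ n ≤ (1 + |x|) ^ (n + 2) := by
    rw [pow_add, mul_comm, ← sq_abs x]; gcongr; linarith
  calc K₁ + |x| * K₂ + x ^ 2 * (1 + |x|) ^ n * K₃
      ≤ 1 * K₁ + (1 + |x|) ^ (n + 2) * K₂ + (1 + |x|) ^ (n + 2) * K₃ := by gcongr; linarith
    _ ≤ (K₁ + K₂ + K₃) * (1 + |x|) ^ (n + 2) := by nlinarith

noncomputable def polyMoment (φ : ℝ → ℝ) (n : ℕ) : ℝ := ∫ y, (1 + |y|) ^ n * φ y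

section PolyMoment

variable {φ : ℝ → ℝ}

lemma polyMoment_nonneg (hφ : ∀ y, 0 ≤ φ y) (n : ℕ) : 0 ≤ polyMoment φ n :=
  integral_nonneg fun y => mul_nonneg (by positivity) (hφ y)

lemma integrable_mul_of_abs_le (hφ : ∀ y, 0 ≤ φ y)
    (hmom : ∀ n : ℕ, Integrable fun y => (1 + |y|) ^ n * φ y) {g : ℝ → ℝ} (hg : Continuous g)
    {C : ℝ} {n : ℕ} (hgC : ∀ y, |g y| ≤ C * (1 + |y|) ^ n) :
    Integrable fun y => g y * φ y := by
  have hφint : Integrable φ := by simpa using hmom 0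
  refine ((hmom n).const_mul C).mono' (hg.aestronglyMeasurable.mul hφint.1)
    (Eventually.of_forall fun y => ?_)
  rw [Real.norm_eq_abs, abs_mul, abs_of_nonneg (hφ y), ← mul_assoc]
  exact mul_le_mul_of_nonneg_right (hgC y) (hφ y)

lemma abs_integral_mul_le (hφ : ∀ y, 0 ≤ φ y)
    (hmom : ∀ n : ℕ, Integrable fun y => (1 + |y|) ^ n * φ y) {g : ℝ → ℝ}
    {C : ℝ} {n : ℕ} (hgC : ∀ y, |g y| ≤ C * (1 + |y|) ^ n) :
    |∫ y, g y * φ y| ≤ C * polyMoment φ n := by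
  calc |∫ y, g y * φ y| ≤ ∫ y, C * ((1 + |y|) ^ n * φ y) :=
        norm_integral_le_of_norm_le (f := fun y => g y * φ y) ((hmom n).const_mul C) <|
          Eventually.of_forall fun y => by
          rw [Real.norm_eq_abs, abs_mul, abs_of_nonneg (hφ y), ← mul_assoc]
          exact mul_le_mul_of_nonneg_right (hgC y) (hφ y)
    _ = C * polyMoment φ n := integral_const_mul C _

lemma abs_integral_comp_mul_sub_le (hφ : ∀ y, 0 ≤ φ y)
    (hmom : ∀ n : ℕ, Integrable fun y => (1 + |y|) ^ n * φ y) {g : ℝ → ℝ}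
    (hg : Differentiable ℝ g) {C₀ C₁ : ℝ} {n₀ n₁ : ℕ}
    (hg₀ : ∀ y, |g y| ≤ C₀ * (1 + |y|) ^ n₀) (hg₁ : ∀ y, |deriv g y| ≤ C₁ * (1 + |y|) ^ n₁)
    {s : ℝ} (hs₀ : 0 ≤ s) (hs₁ : s ≤ 1) :
    |(∫ y, g (s * y) * φ y) - ∫ y, g y * φ y| ≤ (1 - s) * C₁ * polyMoment φ (n₁ + 1) := by
  have hs : |s| ≤ 1 := abs_le.2 ⟨by linarith, hs₁⟩
  have hC₁ := nonneg_of_abs_le_mul_one_add_abs_pow hg₁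
  have hpoint : ∀ y, |g (s * y) - g y| ≤ (1 - s) * C₁ * (1 + |y|) ^ (n₁ + 1) := by
    intro y
    have hsy : |s * y| ≤ |y| := by rw [abs_mul]; exact mul_le_of_le_one_left (abs_nonneg y) hs
    have hM : ∀ z ∈ uIcc y (s * y), ‖deriv g z‖ ≤ C₁ * (1 + |y|) ^ n₁ := fun z hz =>
      (hg₁ z).trans <| mul_le_mul_of_nonneg_left (pow_le_pow_left₀ (by positivity)
        (by linarith [(abs_le_max_abs_abs_of_mem_uIcc hz).trans (max_le le_rfl hsy)]) _) hC₁
    have hmvt := (convex_uIcc y (s * y)).norm_image_sub_le_of_norm_deriv_le (fun z _ => hg z) hM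
      left_mem_uIcc right_mem_uIcc
    have hdist : |s * y - y| = (1 - s) * |y| := by
      rw [show s * y - y = -((1 - s) * y) by ring, abs_neg, abs_mul, abs_of_nonneg (by linarith)]
    calc |g (s * y) - g y| ≤ C₁ * (1 + |y|) ^ n₁ * |s * y - y| := hmvt
      _ = (1 - s) * C₁ * ((1 + |y|) ^ n₁ * |y|) := by rw [hdist]; ring
      _ ≤ (1 - s) * C₁ * (1 + |y|) ^ (n₁ + 1) := by
        rw [pow_succ]; gcongr; linarith
  have hint_comp : Integrable fun y => g (s * y) * φ y :=
    integrable_mul_of_abs_le hφ hmom (hg.continuous.comp (continuous_const_mul s))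
      (abs_comp_mul_le hg₀ hs)
  rw [← integral_sub hint_comp (integrable_mul_of_abs_le hφ hmom hg.continuous hg₀)]
  simp_rw [← sub_mul]
  exact abs_integral_mul_le hφ hmom hpoint

lemma integral_comp_mul_add_mul_sub_eq (hφ : ∀ y, 0 ≤ φ y)
    (hmom : ∀ n : ℕ, Integrable fun y => (1 + |y|) ^ n * φ y) {f : ℝ → ℝ} (hf : ContDiff ℝ 1 f)
    {C₀ C₁ : ℝ} {n₀ n₁ : ℕ} (hf₀ : ∀ y, |f y| ≤ C₀ * (1 + |y|) ^ n₀)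
    (hf₁ : ∀ y, |deriv f y| ≤ C₁ * (1 + |y|) ^ n₁) {a s : ℝ} (ha : |a| ≤ 1) (hs : |s| ≤ 1)
    (x : ℝ) :
    (∫ y, f (a * x + s * y) * φ y) - a * x * ∫ y, deriv f y * φ y
      = (∫ y, f (s * y) * φ y) + a * x * ((∫ y, deriv f (s * y) * φ y) - ∫ y, deriv f y * φ y)
        + ∫ y, (f (a * x + s * y) - f (s * y) - a * x * deriv f (s * y)) * φ y := by
  have hint₁ : Integrable fun y => f (s * y) * φ y :=
    integrable_mul_of_abs_le hφ hmom (by fun_prop) (abs_comp_mul_le hf₀ hs)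
  have hint₂ : Integrable fun y => deriv f (s * y) * φ y :=
    integrable_mul_of_abs_le hφ hmom ((hf.continuous_deriv le_rfl).comp (continuous_const_mul s))
      (abs_comp_mul_le hf₁ hs)
  have hint₃ : Integrable fun y => f (a * x + s * y) * φ y :=
    integrable_mul_of_abs_le hφ hmom (by fun_prop)
      fun y => abs_apply_le_of_abs_le_add hf₀ (abs_mul_add_mul_le ha hs x y)
  have hint₃₁ : Integrable fun y => f (a * x + s * y) * φ y - f (s * y) * φ y := hint₃.sub hint₁
  have hR : ∫ y, (f (a * x + s * y) - f (s * y) - a * x * deriv f (s * y)) * φ y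
      = (∫ y, f (a * x + s * y) * φ y) - (∫ y, f (s * y) * φ y)
        - a * x * ∫ y, deriv f (s * y) * φ y :=
    calc _ = ∫ y, (f (a * x + s * y) * φ y - f (s * y) * φ y)
            - a * x * (deriv f (s * y) * φ y) :=
          integral_congr_ae (Eventually.of_forall fun y => by ring)
      _ = _ := by
        rw [integral_sub hint₃₁ (hint₂.const_mul _), integral_sub hint₃ hint₁, integral_const_mul]
  rw [hR]
  ring

theorem abs_integral_comp_affine_sub_le (hφ : ∀ y, 0 ≤ φ y)
    (hmom : ∀ n : ℕ, Integrable fun y => (1 + |y|) ^ n * φ y) {f : ℝ → ℝ} (hf : ContDiff ℝ 2 f)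
    {C₀ C₁ C₂ : ℝ} {n₀ n₁ n₂ : ℕ} (hf₀ : ∀ y, |f y| ≤ C₀ * (1 + |y|) ^ n₀)
    (hf₁ : ∀ y, |deriv f y| ≤ C₁ * (1 + |y|) ^ n₁)
    (hf₂ : ∀ y, |deriv (deriv f) y| ≤ C₂ * (1 + |y|) ^ n₂)
    (hcent : ∫ y, f y * φ y = 0) {a : ℝ} (ha : |a| ≤ 1) (x : ℝ) :
    |(∫ y, f (a * x + √(1 - a ^ 2) * y) * φ y) - a * x * ∫ y, deriv f y * φ y|
      ≤ a ^ 2 * (C₁ * polyMoment φ (n₁ + 1) + C₂ * polyMoment φ (n₂ + 1)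
        + C₂ * polyMoment φ n₂) * (1 + |x|) ^ (n₂ + 2) := by
  set s := √(1 - a ^ 2)
  have hs₀ : 0 ≤ s := sqrt_nonneg _
  have hs₁ : s ≤ 1 := sqrt_le_one.2 (by linarith [sq_nonneg a])
  have hs : |s| ≤ 1 := abs_le.2 ⟨by linarith, hs₁⟩
  have hsa : 1 - s ≤ a ^ 2 := one_sub_sqrt_one_sub_sq_le a
  have hf' : ContDiff ℝ 1 (deriv f) := hf.iterate_deriv' 1 1
  have hA : ∫ y, f (s * y) * φ y = (∫ y, f (s * y) * φ y) - ∫ y, f y * φ y := by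
    rw [hcent, sub_zero]
  rw [integral_comp_mul_add_mul_sub_eq hφ hmom (hf.of_le one_le_two) hf₀ hf₁ ha hs x, hA]
  set A := (∫ y, f (s * y) * φ y) - ∫ y, f y * φ y
  set B := (∫ y, deriv f (s * y) * φ y) - ∫ y, deriv f y * φ y
  set R := ∫ y, (f (a * x + s * y) - f (s * y) - a * x * deriv f (s * y)) * φ y
  have hA' : |A| ≤ (1 - s) * C₁ * polyMoment φ (n₁ + 1) :=
    abs_integral_comp_mul_sub_le hφ hmom (hf.differentiable two_ne_zero) hf₀ hf₁ hs₀ hs₁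
  have hB' : |B| ≤ (1 - s) * C₂ * polyMoment φ (n₂ + 1) :=
    abs_integral_comp_mul_sub_le hφ hmom (hf'.differentiable one_ne_zero) hf₁ hf₂ hs₀ hs₁
  have hR' : |R| ≤ C₂ * (1 + |x|) ^ n₂ * (a * x) ^ 2 * polyMoment φ n₂ :=
    abs_integral_mul_le hφ hmom (abs_taylor_remainder_comp_mul_add_mul_le hf hf₂ ha hs x)
  have hK₁ : 0 ≤ C₁ * polyMoment φ (n₁ + 1) :=
    mul_nonneg (nonneg_of_abs_le_mul_one_add_abs_pow hf₁) (polyMoment_nonneg hφ _)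
  have hC₂ : 0 ≤ C₂ := nonneg_of_abs_le_mul_one_add_abs_pow hf₂
  have hK₂ : 0 ≤ C₂ * polyMoment φ (n₂ + 1) := mul_nonneg hC₂ (polyMoment_nonneg hφ _)
  have hK₃ : 0 ≤ C₂ * polyMoment φ n₂ := mul_nonneg hC₂ (polyMoment_nonneg hφ _)
  have hterm₁ : |A| ≤ a ^ 2 * (C₁ * polyMoment φ (n₁ + 1)) :=
    calc |A| ≤ (1 - s) * (C₁ * polyMoment φ (n₁ + 1)) := by rw [← mul_assoc]; exact hA'
      _ ≤ _ := by gcongr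
  have hterm₂ : |a * x * B| ≤ a ^ 2 * (|x| * (C₂ * polyMoment φ (n₂ + 1))) :=
    calc |a * x * B| = |a| * |x| * |B| := by rw [abs_mul, abs_mul]
      _ ≤ 1 * |x| * ((1 - s) * C₂ * polyMoment φ (n₂ + 1)) := by gcongr
      _ = (1 - s) * (|x| * (C₂ * polyMoment φ (n₂ + 1))) := by ring
      _ ≤ _ := by gcongr
  have hterm₃ : |R| ≤ a ^ 2 * (x ^ 2 * (1 + |x|) ^ n₂ * (C₂ * polyMoment φ n₂)) :=
    hR'.trans_eq (by ring)
  calc |A + a * x * B + R| ≤ |A| + |a * x * B| + |R| := abs_add_three _ _ _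
    _ ≤ a ^ 2 * (C₁ * polyMoment φ (n₁ + 1) + |x| * (C₂ * polyMoment φ (n₂ + 1))
          + x ^ 2 * (1 + |x|) ^ n₂ * (C₂ * polyMoment φ n₂)) := by linarith
    _ ≤ _ := (mul_le_mul_of_nonneg_left (add_mul_abs_add_sq_mul_le hK₁ hK₂ hK₃ x n₂)
          (sq_nonneg a)).trans_eq (mul_assoc _ _ _).symm

end PolyMoment

lemma integrable_one_add_abs_pow_mul_exp_neg_mul_sq {b : ℝ} (hb : 0 < b) (n : ℕ) :
    Integrable fun y : ℝ => (1 + |y|) ^ n * exp (-b * y ^ 2) := by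
  have hpow : Integrable fun y : ℝ => y ^ (n : ℝ) * exp (-b * y ^ 2) :=
    integrable_rpow_mul_exp_neg_mul_sq hb (by linarith [n.cast_nonneg (α := ℝ)])
  refine (((integrable_exp_neg_mul_sq hb).add hpow.norm).const_mul (2 ^ (n - 1))).mono'
    (by fun_prop) (Eventually.of_forall fun y => ?_)
  rw [norm_of_nonneg (by positivity), Pi.add_apply, rpow_natCast, norm_mul, norm_pow,
    Real.norm_eq_abs, norm_of_nonneg (exp_pos _).le]
  calc (1 + |y|) ^ n * exp (-b * y ^ 2) ≤ 2 ^ (n - 1) * (1 + |y| ^ n) * exp (-b * y ^ 2) := by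
        gcongr; simpa using add_pow_le zero_le_one (abs_nonneg y) n
    _ = _ := by ring

/-- Quantitative first-order asymptotics of the one-dimensional OU semigroup on a centered
`C²` function with polynomially bounded derivatives:
`|e^{μ t} T_t f (x) - x ∫ f' dφ| ≤ C̃ (1+|x|^ñ) e^{-μ t}` for `t ≥ 1`. -/
theorem OU_semigroup_first_order_rate
    (μ σ : ℝ) (hμ : 0 < μ) (hσ : 0 < σ)
    (φ : ℝ → ℝ)
    (hφ : ∀ y, φ y = Real.sqrt (μ / (Real.pi * σ ^ 2)) * Real.exp (-μ * y ^ 2 / σ ^ 2))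
    (T : ℝ → (ℝ → ℝ) → ℝ → ℝ)
    (hT : ∀ t f x, T t f x =
      ∫ y, f (Real.exp (-μ * t) * x + Real.sqrt (1 - Real.exp (-2 * μ * t)) * y) * φ y)
    (f : ℝ → ℝ)
    (hf2 : ContDiff ℝ 2 f)
    (hgrow : ∃ (C₀ : ℝ) (n : ℕ), ∀ x, |f x| ≤ C₀ * (1 + |x| ^ n))
    (hd1 : ∃ (C₁ : ℝ) (n₁ : ℕ), ∀ x, |deriv f x| ≤ C₁ * (1 + |x| ^ n₁))
    (hd2 : ∃ (C₂ : ℝ) (n₂ : ℕ), ∀ x, |deriv (deriv f) x| ≤ C₂ * (1 + |x| ^ n₂))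
    (hcentered : (∫ y, f y * φ y) = 0) :
    ∃ (C : ℝ) (m : ℕ), 0 < C ∧ 0 < m ∧ ∀ t ≥ (1:ℝ), ∀ x : ℝ,
      |Real.exp (μ * t) * T t f x - x * ∫ y, deriv f y * φ y|
        ≤ C * (1 + |x| ^ m) * Real.exp (-μ * t) := by
  obtain ⟨C₀, n₀, hf₀⟩ := exists_abs_le_mul_one_add_abs_pow hgrow
  obtain ⟨C₁, n₁, hf₁⟩ := exists_abs_le_mul_one_add_abs_pow hd1
  obtain ⟨C₂, n₂, hf₂⟩ := exists_abs_le_mul_one_add_abs_pow hd2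
  have hφ' : φ = fun y => √(μ / (π * σ ^ 2)) * exp (-(μ / σ ^ 2) * y ^ 2) :=
    funext fun y => by rw [hφ]; ring_nf
  have hφ₀ : ∀ y, 0 ≤ φ y := fun y => by rw [hφ']; positivity
  have hmom : ∀ n : ℕ, Integrable fun y => (1 + |y|) ^ n * φ y := fun n => by
    simpa only [hφ', mul_left_comm] using
      (integrable_one_add_abs_pow_mul_exp_neg_mul_sq (by positivity) n).const_mul
        (√(μ / (π * σ ^ 2)))
  set K := C₁ * polyMoment φ (n₁ + 1) + C₂ * polyMoment φ (n₂ + 1) + C₂ * polyMoment φ n₂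
  refine ⟨2 ^ (n₂ + 1) * max K 1, n₂ + 2, by positivity, by omega, fun t ht x => ?_⟩
  rw [hT, show exp (-2 * μ * t) = exp (-μ * t) ^ 2 by rw [← exp_nat_mul]; ring_nf]
  set a := exp (-μ * t)
  have ha : |a| ≤ 1 := by
    rw [abs_of_pos (exp_pos _)]; exact exp_le_one_iff.2 (by nlinarith)
  have hea : exp (μ * t) * a = 1 := by rw [← exp_add]; simp
  have hcore : |(∫ y, f (a * x + √(1 - a ^ 2) * y) * φ y) - a * x * ∫ y, deriv f y * φ y|
      ≤ a ^ 2 * K * (1 + |x|) ^ (n₂ + 2) :=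
    abs_integral_comp_affine_sub_le hφ₀ hmom hf2 hf₀ hf₁ hf₂ hcentered ha x
  have hw : (1 + |x|) ^ (n₂ + 2) ≤ 2 ^ (n₂ + 1) * (1 + |x| ^ (n₂ + 2)) := by
    simpa using add_pow_le zero_le_one (abs_nonneg x) (n₂ + 2)
  calc _ = |exp (μ * t) * ((∫ y, f (a * x + √(1 - a ^ 2) * y) * φ y)
          - a * x * ∫ y, deriv f y * φ y)| := by
        congr 1; linear_combination (x * ∫ y, deriv f y * φ y) * hea
    _ ≤ exp (μ * t) * (a ^ 2 * K * (1 + |x|) ^ (n₂ + 2)) := by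
        rw [abs_mul, abs_of_pos (exp_pos _)]; gcongr
    _ = K * (1 + |x|) ^ (n₂ + 2) * a := by linear_combination (K * (1 + |x|) ^ (n₂ + 2) * a) * hea
    _ ≤ max K 1 * (2 ^ (n₂ + 1) * (1 + |x| ^ (n₂ + 2))) * a := by
        gcongr; exact le_max_left K 1
    _ = _ := by ring
end

section
/- For the continuous-time binary Galton-Watson process with $p > 1/2$ and branching rate $\lambda$, the fourth moment satisfies: $\sup_{t \ge 0} e^{-4\lambda_p t}\, \mathbb{E}|X_t|^4 < \infty$, where $\lambda_p = (2p-1)\lambda$. Moreover all moments $\mathbb{E}|X_t|^n$ are finite for every $n$ and $t \ge 0$. -/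
/-!
Substituting `θ = -log s` turns the Laplace transform into the generating function
`𝔼[s ^ X] = 1 - m (1 - s) / (a - b s)` on `(0, 1)`, where `m = 2p - 1`, `E = exp (-m λ t)`,
`a = p - E (1 - p)` and `b = p (1 - E)`. Differentiating under the integral sign, the `j`-th
derivative `𝔼[X (X - 1) ⋯ (X - j + 1) s ^ (X - j)]`, `j ≥ 1`, equals
`j! m (a - b) b ^ (j - 1) / (a - b s) ^ (j + 1)`. As `a - b = m E` and `0 ≤ b ≤ 1`, this is at
most `j! / (m E) ^ j` uniformly in `s`, and Fatou's lemma as `s ↑ 1` bounds the `j`-th factorial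
moment by `j! (exp (m λ t) / m) ^ j`. Powers are controlled by
factorial powers through `k ^ n ≤ 2 ^ n k (k - 1) ⋯ (k - n + 1) + (2 n) ^ n`.
-/

open MeasureTheory Set Filter Topology
open scoped Nat

theorem hasDerivAt_descFactorial_mul_pow (k j : ℕ) (x : ℝ) :
    HasDerivAt (fun x : ℝ => (k.descFactorial j : ℝ) * x ^ (k - j))
      ((k.descFactorial (j + 1) : ℝ) * x ^ (k - (j + 1))) x := by
  refine ((hasDerivAt_pow (k - j) x).const_mul (k.descFactorial j : ℝ)).congr_deriv ?_
  rw [Nat.descFactorial_succ, Nat.sub_sub]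
  push_cast
  ring

theorem exists_abs_descFactorial_mul_pow_le (j : ℕ) {r : ℝ} (hr0 : 0 < r) (hr1 : r < 1) :
    ∃ C, ∀ (k : ℕ) {x : ℝ}, |x| ≤ r → |(k.descFactorial j : ℝ) * x ^ (k - j)| ≤ C := by
  obtain ⟨C, hC⟩ := (tendsto_pow_const_mul_const_pow_of_abs_lt_one j
    (by rwa [abs_of_pos hr0])).bddAbove_range
  refine ⟨C / r ^ j, fun k x hx => ?_⟩
  have hC0 : 0 ≤ C := (by positivity : (0:ℝ) ≤ (0:ℕ) ^ j * r ^ 0).trans (hC ⟨0, rfl⟩)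
  rw [abs_mul, abs_pow, Nat.abs_cast]
  calc (k.descFactorial j : ℝ) * |x| ^ (k - j) ≤ (k.descFactorial j : ℝ) * r ^ (k - j) := by
        gcongr
    _ ≤ C / r ^ j := by
        rcases lt_or_ge k j with hkj | hjk
        · rw [Nat.descFactorial_eq_zero_iff_lt.mpr hkj]
          simp only [Nat.cast_zero, zero_mul]
          positivity
        rw [pow_sub₀ r hr0.ne' hjk, le_div_iff₀ (by positivity)]
        calc (k.descFactorial j : ℝ) * (r ^ k * (r ^ j)⁻¹) * r ^ j
            = (k.descFactorial j : ℝ) * r ^ k := by field_simp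
          _ ≤ (k : ℝ) ^ j * r ^ k := by gcongr; exact_mod_cast Nat.descFactorial_le_pow k j
          _ ≤ C := hC ⟨k, rfl⟩

theorem pow_le_two_pow_mul_descFactorial_add (n k : ℕ) :
    k ^ n ≤ 2 ^ n * k.descFactorial n + (2 * n) ^ n := by
  rcases le_or_gt (2 * n) k with h | h
  · calc k ^ n ≤ (2 * (k + 1 - n)) ^ n := Nat.pow_le_pow_left (by omega) n
      _ = 2 ^ n * (k + 1 - n) ^ n := Nat.mul_pow ..
      _ ≤ 2 ^ n * k.descFactorial n := Nat.mul_le_mul_left _ (Nat.pow_sub_le_descFactorial k n)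
      _ ≤ _ := Nat.le_add_right ..
  · calc k ^ n ≤ (2 * n) ^ n := Nat.pow_le_pow_left h.le n
      _ ≤ _ := Nat.le_add_left ..

theorem eqOn_of_hasDerivAt_succ {U : Set ℝ} (hU : IsOpen U) {F f : ℕ → ℝ → ℝ}
    (hF : ∀ j, ∀ x ∈ U, HasDerivAt (F j) (F (j + 1) x) x)
    (hf : ∀ j, ∀ x ∈ U, HasDerivAt (f j) (f (j + 1) x) x) (h₀ : EqOn (F 0) (f 0) U) :
    ∀ j, EqOn (F j) (f j) U := by
  intro j
  induction j with
  | zero => exact h₀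
  | succ j ih =>
    intro x hx
    exact (hF j x hx).unique
      ((hf j x hx).congr_of_eventuallyEq (eventuallyEq_of_mem (hU.mem_nhds hx) ih))

section GeneratingFunction

variable {Ω : Type*} [MeasurableSpace Ω]

noncomputable def pgfDeriv (P : Measure Ω) (X : Ω → ℕ) (j : ℕ) (s : ℝ) : ℝ :=
  ∫ ω, ((X ω).descFactorial j : ℝ) * s ^ (X ω - j) ∂P

variable {P : Measure Ω} [IsFiniteMeasure P] {X : Ω → ℕ}

theorem integrable_descFactorial_mul_pow (hX : Measurable X) (j : ℕ) {s : ℝ} (hs : |s| < 1) :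
    Integrable (fun ω => ((X ω).descFactorial j : ℝ) * s ^ (X ω - j)) P := by
  obtain ⟨C, hC⟩ := exists_abs_descFactorial_mul_pow_le j
    (r := (1 + |s|) / 2) (by positivity) (by linarith)
  exact (integrable_const C).mono' (by fun_prop)
    (ae_of_all _ fun ω => hC (X ω) (by linarith))

theorem hasDerivAt_pgfDeriv (hX : Measurable X) (j : ℕ) {s : ℝ} (hs : |s| < 1) :
    HasDerivAt (pgfDeriv P X j) (pgfDeriv P X (j + 1) s) s := by
  obtain ⟨C, hC⟩ := exists_abs_descFactorial_mul_pow_le (j + 1)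
    (r := (1 + |s|) / 2) (by positivity) (by linarith)
  have hball : ∀ x ∈ Metric.ball s ((1 - |s|) / 2), |x| ≤ (1 + |s|) / 2 := fun x hx => by
    rw [Metric.mem_ball, Real.dist_eq] at hx
    linarith [abs_sub_abs_le_abs_sub x s]
  exact (hasDerivAt_integral_of_dominated_loc_of_deriv_le (bound := fun _ => C)
    (Metric.ball_mem_nhds s (by linarith))
    (F := fun x ω => ((X ω).descFactorial j : ℝ) * x ^ (X ω - j))
    (Eventually.of_forall fun _ => by fun_prop)
    (integrable_descFactorial_mul_pow hX j hs) (by fun_prop)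
    (ae_of_all _ fun ω x hx => hC (X ω) (hball x hx)) (integrable_const C)
    (ae_of_all _ fun ω x _ => hasDerivAt_descFactorial_mul_pow (X ω) j x)).2

theorem integrable_descFactorial_of_pgfDeriv_le (hX : Measurable X) {j : ℕ} {B : ℝ}
    (hB : ∀ s ∈ Ioo (0 : ℝ) 1, pgfDeriv P X j s ≤ B) :
    Integrable (fun ω => ((X ω).descFactorial j : ℝ)) P ∧
      ∫ ω, ((X ω).descFactorial j : ℝ) ∂P ≤ B := by
  set g : ℝ → Ω → ENNReal :=
    fun s ω => ENNReal.ofReal (((X ω).descFactorial j : ℝ) * s ^ (X ω - j))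
  have hlim : ∀ ω, liminf (fun s => g s ω) (𝓝[<] 1) = ENNReal.ofReal ((X ω).descFactorial j) := by
    intro ω
    refine Tendsto.liminf_eq (ENNReal.tendsto_ofReal ?_)
    have := ((continuous_pow (X ω - j)).const_mul ((X ω).descFactorial j : ℝ)).tendsto 1
    simpa using this.mono_left nhdsWithin_le_nhds
  have hevent : ∀ᶠ s in 𝓝[<] (1 : ℝ), ∫⁻ ω, g s ω ∂P ≤ ENNReal.ofReal B := by
    filter_upwards [Ioo_mem_nhdsLT (zero_lt_one' ℝ)] with s hs
    have hs0 : 0 ≤ s := hs.1.le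
    rw [← ofReal_integral_eq_lintegral_ofReal
      (integrable_descFactorial_mul_pow hX j (abs_lt.2 ⟨by linarith, hs.2⟩))
      (ae_of_all _ fun ω => by positivity)]
    exact ENNReal.ofReal_le_ofReal (hB s hs)
  have hfatou : ∫⁻ ω, ENNReal.ofReal ((X ω).descFactorial j) ∂P ≤ ENNReal.ofReal B := by
    calc ∫⁻ ω, ENNReal.ofReal ((X ω).descFactorial j) ∂P
        = ∫⁻ ω, liminf (fun s => g s ω) (𝓝[<] 1) ∂P := by simp_rw [hlim]
      _ ≤ liminf (fun s => ∫⁻ ω, g s ω ∂P) (𝓝[<] 1) :=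
          lintegral_liminf_le fun s => by fun_prop
      _ ≤ ENNReal.ofReal B := liminf_le_of_frequently_le' hevent.frequently
  have hnonneg : 0 ≤ᵐ[P] fun ω => ((X ω).descFactorial j : ℝ) := ae_of_all _ fun _ => by positivity
  have hmeas : AEStronglyMeasurable (fun ω => ((X ω).descFactorial j : ℝ)) P := by fun_prop
  refine ⟨⟨hmeas, (hasFiniteIntegral_iff_ofReal hnonneg).2 (hfatou.trans_lt ENNReal.ofReal_lt_top)⟩,
    ?_⟩
  rw [integral_eq_lintegral_of_nonneg_ae hnonneg hmeas]
  have hB0 : 0 ≤ B := (integral_nonneg fun ω => by positivity).trans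
    (hB (1 / 2) ⟨by norm_num, by norm_num⟩)
  exact ENNReal.toReal_le_of_le_ofReal hB0 hfatou

end GeneratingFunction

noncomputable def gwPgfDeriv (m a b : ℝ) : ℕ → ℝ → ℝ
  | 0, s => 1 - m * (1 - s) / (a - b * s)
  | j + 1, s => (j + 1)! * (m * (a - b)) * b ^ j / (a - b * s) ^ (j + 2)

theorem hasDerivAt_gwPgfDeriv (m a b : ℝ) (j : ℕ) {s : ℝ} (hs : a - b * s ≠ 0) :
    HasDerivAt (gwPgfDeriv m a b j) (gwPgfDeriv m a b (j + 1) s) s := by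
  have hden : HasDerivAt (fun x => a - b * x) (-b) s := by
    simpa using ((hasDerivAt_id s).const_mul b).const_sub a
  cases j with
  | zero =>
    have hnum : HasDerivAt (fun x => m * (1 - x)) (-m) s := by
      simpa using ((hasDerivAt_id s).const_sub 1).const_mul m
    refine ((hnum.div hden hs).const_sub 1).congr_deriv ?_
    simp only [gwPgfDeriv]
    field_simp
    ring
  | succ j =>
    refine ((hasDerivAt_const s _).div (hden.pow (j + 2)) (pow_ne_zero _ hs)).congr_deriv ?_
    simp only [gwPgfDeriv, Nat.factorial_succ, Pi.pow_apply]
    field_simp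
    push_cast
    ring

theorem gwPgfDeriv_succ_le {m a b s : ℝ} (hm : 0 ≤ m) (hb0 : 0 ≤ b) (hb1 : b ≤ 1)
    (hab : 0 < a - b) (hs : s ≤ 1) (j : ℕ) :
    gwPgfDeriv m a b (j + 1) s ≤ (j + 1)! * m / (a - b) ^ (j + 1) := by
  have hden : a - b ≤ a - b * s := by nlinarith
  calc gwPgfDeriv m a b (j + 1) s ≤ (j + 1)! * (m * (a - b)) * 1 / (a - b) ^ (j + 2) := by
        simp only [gwPgfDeriv]
        gcongr
        exact pow_le_one₀ hb0 hb1
    _ = (j + 1)! * m / (a - b) ^ (j + 1) := by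
        field_simp
        ring

section GaltonWatson

variable {Ω : Type*} [MeasurableSpace Ω]

/-- The Laplace transform of the binary Galton-Watson population at time `t`, written through
`E = exp (-(2p - 1) λ t)`. -/
def GWLaplace (P : Measure Ω) (X : Ω → ℕ) (lam p E : ℝ) : Prop :=
  ∀ θ ≥ (0:ℝ), (∫ ω, Real.exp (-θ * (X ω : ℝ)) ∂P)
    = (lam * (1 - p) * (Real.exp (-θ) - 1) - E * (lam * p * Real.exp (-θ) - lam * (1 - p)))
      / (lam * p * (Real.exp (-θ) - 1) - E * (lam * p * Real.exp (-θ) - lam * (1 - p)))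

variable {P : Measure Ω} {X : Ω → ℕ} {lam p E : ℝ}

theorem pgfDeriv_zero_eq_gwPgfDeriv_of_gwLaplace (hlam : lam ≠ 0)
    (hLap : GWLaplace P X lam p E) {s : ℝ} (hs : s ∈ Ioo (0 : ℝ) 1)
    (hden : p - E * (1 - p) - p * (1 - E) * s ≠ 0) :
    pgfDeriv P X 0 s = gwPgfDeriv (2 * p - 1) (p - E * (1 - p)) (p * (1 - E)) 0 s := by
  have hexp : Real.exp (-(-Real.log s)) = s := by rw [neg_neg, Real.exp_log hs.1]
  have hpow : ∀ k : ℕ, s ^ k = Real.exp (-(-Real.log s) * k) := fun k => by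
    rw [neg_neg, mul_comm, Real.exp_nat_mul, Real.exp_log hs.1]
  have h := hLap (-Real.log s) (by linarith [Real.log_neg hs.1 hs.2])
  simp only [pgfDeriv, gwPgfDeriv, Nat.descFactorial_zero, Nat.cast_one, one_mul, Nat.sub_zero,
    hpow, h, hexp]
  set d := p - E * (1 - p) - p * (1 - E) * s
  rw [show lam * p * (s - 1) - E * (lam * p * s - lam * (1 - p)) = -lam * d by ring]
  field_simp
  ring

variable [IsProbabilityMeasure P]

theorem integrable_descFactorial_of_gwLaplace (hX : Measurable X) (hlam : lam ≠ 0)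
    (hp : 1 / 2 < p) (hp1 : p ≤ 1) (hE0 : 0 < E) (hE1 : E ≤ 1)
    (hLap : GWLaplace P X lam p E) (n : ℕ) :
    Integrable (fun ω => ((X ω).descFactorial n : ℝ)) P ∧
      ∫ ω, ((X ω).descFactorial n : ℝ) ∂P ≤ n ! / ((2 * p - 1) * E) ^ n := by
  set m := 2 * p - 1
  set a := p - E * (1 - p)
  set b := p * (1 - E)
  have hm : 0 < m := by linarith
  have hab : a - b = E * m := by ring
  have hb0 : 0 ≤ b := mul_nonneg (by linarith) (by linarith)
  have hden : ∀ s ≤ 1, 0 < a - b * s := fun s hs => by nlinarith [mul_pos hE0 hm]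
  have hpgf : ∀ j, EqOn (pgfDeriv P X j) (gwPgfDeriv m a b j) (Ioo 0 1) :=
    eqOn_of_hasDerivAt_succ isOpen_Ioo
      (fun j s hs => hasDerivAt_pgfDeriv hX j (abs_lt.2 ⟨by linarith [hs.1], hs.2⟩))
      (fun j s hs => hasDerivAt_gwPgfDeriv m a b j (hden s hs.2.le).ne')
      (fun s hs => pgfDeriv_zero_eq_gwPgfDeriv_of_gwLaplace hlam hLap hs (hden s hs.2.le).ne')
  cases n with
  | zero => simp
  | succ j =>
    refine integrable_descFactorial_of_pgfDeriv_le hX fun s hs => ?_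
    calc pgfDeriv P X (j + 1) s = gwPgfDeriv m a b (j + 1) s := hpgf (j + 1) hs
      _ ≤ (j + 1)! * m / (a - b) ^ (j + 1) :=
          gwPgfDeriv_succ_le hm.le hb0 (by nlinarith) (by linarith [mul_pos hE0 hm]) hs.2.le j
      _ ≤ (j + 1)! / (m * E) ^ (j + 1) := by
          rw [hab, mul_comm E m]
          gcongr
          exact mul_le_of_le_one_right (by positivity) (by linarith)

theorem integrable_pow_of_gwLaplace (hX : Measurable X) (hlam : lam ≠ 0)
    (hp : 1 / 2 < p) (hp1 : p ≤ 1) (hE0 : 0 < E) (hE1 : E ≤ 1)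
    (hLap : GWLaplace P X lam p E) (n : ℕ) :
    Integrable (fun ω => (X ω : ℝ) ^ n) P ∧
      ∫ ω, (X ω : ℝ) ^ n ∂P ≤ (2 ^ n * n ! / (2 * p - 1) ^ n + (2 * n) ^ n) / E ^ n := by
  obtain ⟨hfac, hfac_le⟩ := integrable_descFactorial_of_gwLaplace hX hlam hp hp1 hE0 hE1 hLap n
  have hdom : ∀ ω, (X ω : ℝ) ^ n ≤ 2 ^ n * (X ω).descFactorial n + (2 * n) ^ n := fun ω => by
    exact_mod_cast pow_le_two_pow_mul_descFactorial_add n (X ω)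
  have hg : Integrable (fun ω => 2 ^ n * ((X ω).descFactorial n : ℝ) + (2 * n) ^ n) P :=
    (hfac.const_mul _).add (integrable_const _)
  have hpow : Integrable (fun ω => (X ω : ℝ) ^ n) P :=
    hg.mono' (by fun_prop) (ae_of_all _ fun ω => by
      rw [Real.norm_of_nonneg (by positivity)]; exact hdom ω)
  refine ⟨hpow, ?_⟩
  calc ∫ ω, (X ω : ℝ) ^ n ∂P
      ≤ ∫ ω, 2 ^ n * ((X ω).descFactorial n : ℝ) + (2 * n) ^ n ∂P := integral_mono hpow hg hdom
    _ = 2 ^ n * ∫ ω, ((X ω).descFactorial n : ℝ) ∂P + (2 * n) ^ n := by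
        rw [integral_add (hfac.const_mul _) (integrable_const _), integral_const_mul]
        simp
    _ ≤ 2 ^ n * (n ! / ((2 * p - 1) * E) ^ n) + (2 * n) ^ n := by gcongr
    _ ≤ (2 ^ n * n ! / (2 * p - 1) ^ n + (2 * n) ^ n) / E ^ n := by
        rw [add_div, mul_pow]
        gcongr
        · exact (by ring : (2 : ℝ) ^ n * (n ! / ((2 * p - 1) ^ n * E ^ n))
            = 2 ^ n * n ! / (2 * p - 1) ^ n / E ^ n).le
        · exact le_div_self (by positivity) (by positivity) (pow_le_one₀ hE0.le hE1)

end GaltonWatson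

/-- For the continuous-time binary Galton-Watson process (characterized by its explicit
Laplace transform), the fourth moment satisfies `sup_t e^{-4λ_p t} E|X_t|⁴ < ∞`, and all
moments `E|X_t|ⁿ` are finite. -/
theorem binary_GW_moment_bounds
    {Ω : Type*} [MeasurableSpace Ω] (P : Measure Ω) [IsProbabilityMeasure P]
    (lam p : ℝ) (hlam : 0 < lam) (hp : 1 / 2 < p) (hp1 : p ≤ 1)
    (N : ℝ → Ω → ℕ) (hmN : ∀ t, Measurable (N t))
    -- the Laplace transform of `|X_t|` is the explicit Galton-Watson one
    (hLap : ∀ t ≥ (0:ℝ), ∀ θ ≥ (0:ℝ),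
      (∫ ω, Real.exp (-θ * (N t ω : ℝ)) ∂P)
        = (lam * (1 - p) * (Real.exp (-θ) - 1)
            - Real.exp (-(2 * p - 1) * lam * t) * (lam * p * Real.exp (-θ) - lam * (1 - p)))
          / (lam * p * (Real.exp (-θ) - 1)
            - Real.exp (-(2 * p - 1) * lam * t) * (lam * p * Real.exp (-θ) - lam * (1 - p)))) :
    (∃ C : ℝ, ∀ t ≥ (0:ℝ),
      (∫ ω, ((N t ω : ℝ)) ^ 4 ∂P) ≤ C * Real.exp (4 * (2 * p - 1) * lam * t))
    ∧ ∀ (n : ℕ), ∀ t ≥ (0:ℝ), Integrable (fun ω => ((N t ω : ℝ)) ^ n) P := by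
  have hE1 : ∀ t ≥ (0:ℝ), Real.exp (-(2 * p - 1) * lam * t) ≤ 1 := fun t ht => by
    rw [Real.exp_le_one_iff, neg_mul, neg_mul, neg_nonpos]
    have hm : 0 < 2 * p - 1 := by linarith
    positivity
  have hmoment := fun t (ht : t ≥ 0) =>
    integrable_pow_of_gwLaplace (hmN t) hlam.ne' hp hp1 (Real.exp_pos _) (hE1 t ht) (hLap t ht)
  refine ⟨⟨2 ^ 4 * 4 ! / (2 * p - 1) ^ 4 + (2 * 4) ^ 4, fun t ht => ?_⟩,
    fun n t ht => (hmoment t ht n).1⟩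
  have hE4 :
      (Real.exp (-(2 * p - 1) * lam * t) ^ 4)⁻¹ = Real.exp (4 * (2 * p - 1) * lam * t) := by
    rw [← Real.exp_nat_mul, ← Real.exp_neg]
    ring_nf
  have h4 := (hmoment t ht 4).2
  rw [div_eq_mul_inv, hE4] at h4
  exact_mod_cast h4
end
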